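/- arXiv:2512.17598 — 7 statements merged into one kernel-verified Lean document; each statement's English description precedes it below -/
import Mathlib

section
/- The function V(k,ξ) := sup_{k'≥0} dm(φ(k',k,ξ), x_*) Φ(k,k') is well defined (the supremum is finite) and satisfies, for all k ∈ ℕ and all ξ ∈ ℝ^d: (i) dm(ξ, x_*) ≤ V(k,ξ) ≤ c₀ dm(ξ, x_*), and (ii) V(k+1, f_k(ξ)) ≤ τ(k) V(k,ξ). -/
noncomputable section

/-- The flow map of the nominal algorithm: `flow f k' k ξ = f (k+k'-1) ∘ ⋯ ∘ f k (ξ)`,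
with `flow f 0 k ξ = ξ`. -/
def flow {E : Type*} (f : ℕ → E → E) : ℕ → ℕ → E → E
  | 0, _, ξ => ξ
  | k' + 1, k, ξ => f (k + k') (flow f k' k ξ)

/-- the Lyapunov function `V(k,ξ) := sup_{k'≥0} dm(φ(k',k,ξ), x_*) Φ(k,k')`
is well defined (the supremum is finite) and satisfies
`dm(ξ,x_*) ≤ V(k,ξ) ≤ c₀ dm(ξ,x_*)` and `V(k+1, f_k(ξ)) ≤ τ(k) V(k,ξ)`. -/
theorem stmt1 {E : Type*} [NormedAddCommGroup E] [NormedSpace ℝ E]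
    (f : ℕ → E → E)
    (dm : E → E → ℝ) (Ldm : ℝ) (hLdm : 0 < Ldm)
    (dm_nonneg : ∀ x y, 0 ≤ dm x y)
    (dm_refl : ∀ x, dm x x = 0)
    (dm_symm : ∀ x y, dm x y = dm y x)
    (dm_tri : ∀ x y z, dm x z ≤ dm x y + dm y z)
    (dm_bound : ∀ x y, dm x y ≤ Ldm * ‖x - y‖)
    (xs : E) (c0 : ℝ) (hc0 : 0 < c0)
    (τ : ℕ → ℝ) (hτpos : ∀ i, 0 < τ i) (hτmono : Monotone τ)
    (hconv : ∀ (k k' : ℕ) (ξ : E),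
      dm (flow f k' k ξ) xs ≤ c0 * (∏ i ∈ Finset.Ico k (k + k'), τ i) * dm ξ xs)
    (K : ℕ) (hK : 0 < K)
    (hconvK : ∀ (k k' : ℕ) (ξ : E), K ≤ k' →
      dm (flow f k' k ξ) xs ≤ (∏ i ∈ Finset.Ico k (k + k'), τ i) * dm ξ xs) :
    ∀ (k : ℕ) (ξ : E),
      BddAbove (Set.range fun k' =>
        dm (flow f k' k ξ) xs * (∏ i ∈ Finset.Ico k (k + k'), τ i)⁻¹) ∧
      dm ξ xs ≤
        (⨆ k', dm (flow f k' k ξ) xs * (∏ i ∈ Finset.Ico k (k + k'), τ i)⁻¹) ∧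
      (⨆ k', dm (flow f k' k ξ) xs * (∏ i ∈ Finset.Ico k (k + k'), τ i)⁻¹) ≤
        c0 * dm ξ xs ∧
      (⨆ k', dm (flow f k' (k + 1) (f k ξ)) xs *
          (∏ i ∈ Finset.Ico (k + 1) (k + 1 + k'), τ i)⁻¹) ≤
        τ k * (⨆ k', dm (flow f k' k ξ) xs * (∏ i ∈ Finset.Ico k (k + k'), τ i)⁻¹) := by

  intro k ξ
  have hprodpos : ∀ (a b : ℕ), 0 < ∏ i ∈ Finset.Ico a b, τ i := fun a b =>
    Finset.prod_pos (fun i _ => hτpos i)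
  set g : ℕ → ℝ := fun k' =>
    dm (flow f k' k ξ) xs * (∏ i ∈ Finset.Ico k (k + k'), τ i)⁻¹ with hg
  have hbd : ∀ k', g k' ≤ c0 * dm ξ xs := by
    intro k'
    have hp := hprodpos k (k + k')
    have h := hconv k k' ξ
    rw [hg]
    simp only
    rw [← div_eq_mul_inv, div_le_iff₀ hp]
    calc dm (flow f k' k ξ) xs ≤ c0 * (∏ i ∈ Finset.Ico k (k + k'), τ i) * dm ξ xs := h
      _ = c0 * dm ξ xs * (∏ i ∈ Finset.Ico k (k + k'), τ i) := by ring
  have hbdd : BddAbove (Set.range g) := by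
    refine ⟨c0 * dm ξ xs, ?_⟩
    rintro _ ⟨k', rfl⟩
    exact hbd k'
  have hg0 : g 0 = dm ξ xs := by
    rw [hg]; simp [flow]
  refine ⟨hbdd, ?_, ciSup_le hbd, ?_⟩
  · rw [← hg0]
    exact le_ciSup hbdd 0
  · have hshift : ∀ k', flow f k' (k + 1) (f k ξ) = flow f (k' + 1) k ξ := by
      intro k'
      induction k' with
      | zero => simp [flow]
      | succ n ih =>
        show f (k + 1 + n) (flow f n (k + 1) (f k ξ)) = f (k + (n + 1)) (flow f (n + 1) k ξ)
        rw [ih]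
        congr 1
        omega
    refine ciSup_le fun k' => ?_
    have hsplit : (∏ i ∈ Finset.Ico k (k + (k' + 1)), τ i)
        = τ k * ∏ i ∈ Finset.Ico (k + 1) (k + 1 + k'), τ i := by
      have h1 : k + 1 + k' = k + (k' + 1) := by omega
      rw [h1]
      exact Finset.prod_eq_prod_Ico_succ_bot (by omega) τ
    have hterm : dm (flow f k' (k + 1) (f k ξ)) xs *
        (∏ i ∈ Finset.Ico (k + 1) (k + 1 + k'), τ i)⁻¹ = τ k * g (k' + 1) := by
      rw [hshift, hg]
      simp only
      rw [hsplit, mul_inv]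
      field_simp
      rw [mul_div_mul_right _ _ (hτpos k).ne']
    rw [hterm]
    exact mul_le_mul_of_nonneg_left (le_ciSup hbdd (k' + 1)) (hτpos k).le


end
end

section
/- For every k ∈ ℕ and every ξ ∈ ℝ^d, the supremum defining V is attained within the first K+1 indices: V(k,ξ) = max_{0 ≤ k' ≤ K} dm(φ(k',k,ξ), x_*) Φ(k,k'). -/
noncomputable section

/-- the supremum defining `V` is attained within the first `K+1` indices:
`V(k,ξ) = max_{0 ≤ k' ≤ K} dm(φ(k',k,ξ), x_*) Φ(k,k')`. -/
theorem stmt2 {E : Type*} [NormedAddCommGroup E] [NormedSpace ℝ E]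
    (f : ℕ → E → E)
    (dm : E → E → ℝ) (Ldm : ℝ) (hLdm : 0 < Ldm)
    (dm_nonneg : ∀ x y, 0 ≤ dm x y)
    (dm_refl : ∀ x, dm x x = 0)
    (dm_symm : ∀ x y, dm x y = dm y x)
    (dm_tri : ∀ x y z, dm x z ≤ dm x y + dm y z)
    (dm_bound : ∀ x y, dm x y ≤ Ldm * ‖x - y‖)
    (xs : E) (c0 : ℝ) (hc0 : 0 < c0)
    (τ : ℕ → ℝ) (hτpos : ∀ i, 0 < τ i) (hτmono : Monotone τ)
    (hconv : ∀ (k k' : ℕ) (ξ : E),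
      dm (flow f k' k ξ) xs ≤ c0 * (∏ i ∈ Finset.Ico k (k + k'), τ i) * dm ξ xs)
    (K : ℕ) (hK : 0 < K)
    (hconvK : ∀ (k k' : ℕ) (ξ : E), K ≤ k' →
      dm (flow f k' k ξ) xs ≤ (∏ i ∈ Finset.Ico k (k + k'), τ i) * dm ξ xs) :
    ∀ (k : ℕ) (ξ : E),
      (⨆ k', dm (flow f k' k ξ) xs * (∏ i ∈ Finset.Ico k (k + k'), τ i)⁻¹) =
        (Finset.range (K + 1)).sup' Finset.nonempty_range_add_one
          (fun k' => dm (flow f k' k ξ) xs * (∏ i ∈ Finset.Ico k (k + k'), τ i)⁻¹) := by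
  intro k ξ
  set g : ℕ → ℝ := fun k' => dm (flow f k' k ξ) xs * (∏ i ∈ Finset.Ico k (k + k'), τ i)⁻¹
    with hg
  have hPpos : ∀ k', (0:ℝ) < ∏ i ∈ Finset.Ico k (k + k'), τ i := fun k' =>
    Finset.prod_pos (fun i _ => hτpos i)
  have hbdd : ∀ k', g k' ≤ c0 * dm ξ xs := by
    intro k'
    have h := hconv k k' ξ
    have := mul_le_mul_of_nonneg_right h (le_of_lt (inv_pos.mpr (hPpos k')))
    calc g k' ≤ c0 * (∏ i ∈ Finset.Ico k (k + k'), τ i) * dm ξ xs *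
        (∏ i ∈ Finset.Ico k (k + k'), τ i)⁻¹ := this
      _ = c0 * dm ξ xs := by
          field_simp [(hPpos k').ne']
  have hg0 : g 0 = dm ξ xs := by simp [hg, flow]
  apply le_antisymm
  · apply ciSup_le
    intro k'
    rcases le_or_gt k' K with h | h
    · exact Finset.le_sup' g (Finset.mem_range.mpr (Nat.lt_succ_of_le h))
    · have hle : g k' ≤ g 0 := by
        rw [hg0]
        have h2 := hconvK k k' ξ h.le
        have := mul_le_mul_of_nonneg_right h2 (le_of_lt (inv_pos.mpr (hPpos k')))
        calc g k' ≤ (∏ i ∈ Finset.Ico k (k + k'), τ i) * dm ξ xs *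
            (∏ i ∈ Finset.Ico k (k + k'), τ i)⁻¹ := this
          _ = dm ξ xs := by field_simp [(hPpos k').ne']
      exact hle.trans (Finset.le_sup' g (Finset.mem_range.mpr (Nat.succ_pos K)))
  · apply Finset.sup'_le
    intro k' _
    exact le_ciSup ⟨c0 * dm ξ xs, Set.forall_mem_range.mpr hbdd⟩ k'

end
end

section
/- Suppose that V : ℕ × ℝ^d → [0,∞) satisfies |z| ≤ V(k,z) for all k and z, V(k+1, f_k(z)) ≤ τ(k) V(k,z) with τ(k) ≤ τ̄ < 1 for all k, and |V(k,z₁) − V(k,z₂)| ≤ L_V |z₁ − z₂|. Suppose the disturbance dynamics e_{k+1} = Δ_k(e_k, z_k) admit a function V_Δ : ℕ × ℝ^m → [0,∞) with V_Δ(k,e) ≥ α|e| for some α > 0 and V_Δ(k+1, Δ_k(e,z)) − V_Δ(k,e) ≤ −a|e| + b|z| for all k, e, z, with constants a, b > 0. Suppose the maps g_k satisfy |g_k(z,e₁) − g_k(z,e₂)| ≤ L̄_e |e₁ − e₂| for all e₁, e₂ ∈ ℝ^m, with L_V L̄_e b < a (1 − τ̄). Then there exist constants m > 0 and c > 0 such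 that, for every initial condition (z₀,e₀) of the interconnected system z_{k+1} = g_k(z_k,e_k), e_{k+1} = Δ_k(e_k,z_k), the composite function W_k := V(k,z_k) + m V_Δ(k,e_k) satisfies W_{k+1} ≤ W_k − c(|z_k| + |e_k|) for all k; consequently |z_k| ≤ W₀ and |e_k| ≤ W₀/(mα) for all k, and |z_k| + |e_k| → 0 as k → ∞. -/
noncomputable section

/-- small-gain corollary for the interconnected system: under the stated
Lyapunov, dissipation and small-gain hypotheses, there exist `m > 0` and `c > 0` such
that for every trajectory of the interconnection `z_{k+1} = g_k(z_k,e_k)`,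
`e_{k+1} = Δ_k(e_k,z_k)`, the composite function `W_k := V(k,z_k) + m V_Δ(k,e_k)` satisfies
`W_{k+1} ≤ W_k − c(|z_k| + |e_k|)`; consequently `|z_k| ≤ W₀`, `|e_k| ≤ W₀/(mα)` for all
`k`, and `|z_k| + |e_k| → 0`. -/
theorem stmt7 {E F : Type*} [NormedAddCommGroup E] [NormedSpace ℝ E]
    [NormedAddCommGroup F] [NormedSpace ℝ F]
    (f : ℕ → E → E)
    (τ : ℕ → ℝ) (hτpos : ∀ k, 0 < τ k)
    (τbar : ℝ) (hτbar : τbar < 1) (hττbar : ∀ k, τ k ≤ τbar)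
    (V : ℕ → E → ℝ)
    (hVnonneg : ∀ (k : ℕ) (z : E), 0 ≤ V k z)
    (hVlb : ∀ (k : ℕ) (z : E), ‖z‖ ≤ V k z)
    (hVdec : ∀ (k : ℕ) (z : E), V (k + 1) (f k z) ≤ τ k * V k z)
    (LV : ℝ)
    (hVlip : ∀ (k : ℕ) (z₁ z₂ : E), |V k z₁ - V k z₂| ≤ LV * ‖z₁ - z₂‖)
    (g : ℕ → E → F → E) (hg0 : ∀ (k : ℕ) (z : E), g k z 0 = f k z)
    (Lebar : ℝ)
    (hglip : ∀ (k : ℕ) (z : E) (e₁ e₂ : F), ‖g k z e₁ - g k z e₂‖ ≤ Lebar * ‖e₁ - e₂‖)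
    (Δ : ℕ → F → E → F)
    (VΔ : ℕ → F → ℝ)
    (hVΔnonneg : ∀ (k : ℕ) (e : F), 0 ≤ VΔ k e)
    (α : ℝ) (hα : 0 < α)
    (hVΔlb : ∀ (k : ℕ) (e : F), α * ‖e‖ ≤ VΔ k e)
    (a b : ℝ) (ha : 0 < a) (hb : 0 < b)
    (hdiss : ∀ (k : ℕ) (e : F) (z : E),
      VΔ (k + 1) (Δ k e z) - VΔ k e ≤ -a * ‖e‖ + b * ‖z‖)
    (hsmallgain : LV * Lebar * b < a * (1 - τbar)) :
    ∃ m > (0 : ℝ), ∃ c > (0 : ℝ), ∀ (z : ℕ → E) (e : ℕ → F),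
      (∀ k, z (k + 1) = g k (z k) (e k)) →
      (∀ k, e (k + 1) = Δ k (e k) (z k)) →
      (∀ k, V (k + 1) (z (k + 1)) + m * VΔ (k + 1) (e (k + 1)) ≤
          V k (z k) + m * VΔ k (e k) - c * (‖z k‖ + ‖e k‖)) ∧
      (∀ k, ‖z k‖ ≤ V 0 (z 0) + m * VΔ 0 (e 0)) ∧
      (∀ k, ‖e k‖ ≤ (V 0 (z 0) + m * VΔ 0 (e 0)) / (m * α)) ∧
      Filter.Tendsto (fun k => ‖z k‖ + ‖e k‖) Filter.atTop (nhds 0) := by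
  have hτb : 0 < 1 - τbar := by linarith
  set LV' := max LV 0 with hLV'
  set Le' := max Lebar 0 with hLe'
  have hLVnn : 0 ≤ LV' := le_max_right _ _
  have hLenn : 0 ≤ Le' := le_max_right _ _
  set A := LV' * Le' with hA
  have hAnn : 0 ≤ A := mul_nonneg hLVnn hLenn
  have hAsg : A * b < a * (1 - τbar) := by
    rcases le_or_gt LV 0 with hL | hL
    · have : LV' = 0 := max_eq_right hL
      rw [hA, this]; simpa using mul_pos ha hτb
    rcases le_or_gt Lebar 0 with hLe | hLe
    · have : Le' = 0 := max_eq_right hLe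
      rw [hA, this]; simpa using mul_pos ha hτb
    · have h1 : LV' = LV := max_eq_left hL.le
      have h2 : Le' = Lebar := max_eq_left hLe.le
      rw [hA, h1, h2]; exact hsmallgain
  -- choose m and c
  set m := (A / a + (1 - τbar) / b) / 2 with hm
  have hAa : A / a < (1 - τbar) / b := by
    rw [div_lt_div_iff₀ ha hb]; linarith [hAsg]
  have hmA : A / a < m := by rw [hm]; linarith
  have hmlt : m < (1 - τbar) / b := by rw [hm]; linarith
  have hmpos : 0 < m := lt_of_le_of_lt (div_nonneg hAnn ha.le) hmA
  have hma : A < m * a := by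
    have := (div_lt_iff₀ ha).mp hmA; linarith
  have hmb : m * b < 1 - τbar := (lt_div_iff₀ hb).mp hmlt
  set c := min (1 - τbar - m * b) (m * a - A) with hc
  have hcpos : 0 < c := lt_min (by linarith) (by linarith)
  refine ⟨m, hmpos, c, hcpos, ?_⟩
  intro z e hz he
  -- main decrease
  have hdecW : ∀ k, V (k + 1) (z (k + 1)) + m * VΔ (k + 1) (e (k + 1)) ≤
      V k (z k) + m * VΔ k (e k) - c * (‖z k‖ + ‖e k‖) := by
    intro k
    have h1 : V (k + 1) (z (k + 1)) ≤ V (k + 1) (f k (z k)) + A * ‖e k‖ := by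
      have hl := hVlip (k + 1) (z (k + 1)) (f k (z k))
      have hl' : |V (k + 1) (z (k + 1)) - V (k + 1) (f k (z k))| ≤
          LV' * ‖z (k + 1) - f k (z k)‖ :=
        hl.trans (mul_le_mul_of_nonneg_right (le_max_left _ _) (norm_nonneg _))
      have hgd : ‖z (k + 1) - f k (z k)‖ ≤ Le' * ‖e k‖ := by
        rw [hz k, ← hg0 k (z k)]
        have := hglip k (z k) (e k) 0
        simpa using this.trans (mul_le_mul_of_nonneg_right (le_max_left _ _) (norm_nonneg _))
      have h2 : V (k + 1) (z (k + 1)) - V (k + 1) (f k (z k)) ≤ A * ‖e k‖ := by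
        calc V (k + 1) (z (k + 1)) - V (k + 1) (f k (z k)) ≤
            LV' * ‖z (k + 1) - f k (z k)‖ := (le_abs_self _).trans hl'
          _ ≤ LV' * (Le' * ‖e k‖) := mul_le_mul_of_nonneg_left hgd hLVnn
          _ = A * ‖e k‖ := by ring
      linarith
    have h3 : V (k + 1) (f k (z k)) ≤ τbar * V k (z k) :=
      (hVdec k (z k)).trans (mul_le_mul_of_nonneg_right (hττbar k) (hVnonneg k (z k)))
    have h4 : VΔ (k + 1) (e (k + 1)) - VΔ k (e k) ≤ -a * ‖e k‖ + b * ‖z k‖ := by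
      rw [he k]; exact hdiss k (e k) (z k)
    have h5 : ‖z k‖ ≤ V k (z k) := hVlb k (z k)
    have h6 : c ≤ 1 - τbar - m * b := min_le_left _ _
    have h7 : c ≤ m * a - A := min_le_right _ _
    nlinarith [norm_nonneg (e k), norm_nonneg (z k), hmpos.le]
  have hWmono : ∀ k, V k (z k) + m * VΔ k (e k) ≤ V 0 (z 0) + m * VΔ 0 (e 0) := by
    intro k
    induction k with
    | zero => exact le_refl _
    | succ n ih =>
      have := hdecW n
      have hn : 0 ≤ c * (‖z n‖ + ‖e n‖) := mul_nonneg hcpos.le (by positivity)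
      linarith
  refine ⟨hdecW, ?_, ?_, ?_⟩
  · intro k
    exact (hVlb k (z k)).trans (by nlinarith [hVΔnonneg k (e k), hWmono k])
  · intro k
    rw [le_div_iff₀ (mul_pos hmpos hα)]
    have h1 := hVΔlb k (e k)
    have h2 := hVnonneg k (z k)
    have h3 := hWmono k
    nlinarith [norm_nonneg (e k)]
  · -- convergence via summability
    have hsum : ∀ n, ∑ k ∈ Finset.range n, c * (‖z k‖ + ‖e k‖) ≤
        V 0 (z 0) + m * VΔ 0 (e 0) := by
      intro n
      have htel : ∑ k ∈ Finset.range n,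
          ((V k (z k) + m * VΔ k (e k)) - (V (k+1) (z (k+1)) + m * VΔ (k+1) (e (k+1))))
          = (V 0 (z 0) + m * VΔ 0 (e 0)) - (V n (z n) + m * VΔ n (e n)) :=
        Finset.sum_range_sub' (fun k => V k (z k) + m * VΔ k (e k)) n
      have hle : ∑ k ∈ Finset.range n, c * (‖z k‖ + ‖e k‖) ≤
          ∑ k ∈ Finset.range n,
          ((V k (z k) + m * VΔ k (e k)) - (V (k+1) (z (k+1)) + m * VΔ (k+1) (e (k+1)))) := by
        apply Finset.sum_le_sum
        intro k _
        have := hdecW k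
        linarith
      have hWn : 0 ≤ V n (z n) + m * VΔ n (e n) := by
        have := hVnonneg n (z n); have := hVΔnonneg n (e n); nlinarith
      linarith
    have hsummable : Summable (fun k => c * (‖z k‖ + ‖e k‖)) := by
      apply summable_of_sum_range_le (fun k => mul_nonneg hcpos.le (by positivity)) hsum
    have ht := hsummable.tendsto_atTop_zero
    have := ht.const_mul c⁻¹
    simp only [mul_zero] at this
    convert this using 2 with k
    field_simp
  

end
end

section
/- Suppose each f_k is twice continuously differentiable with ‖Df_k(x)‖ ≤ L_f and ‖D²f_k(x)‖ ≤ L_{Hf} for all k ∈ ℕ and x ∈ ℝ^d. Then for every k ∈ ℕ and every k' ≥ 1, the flow map φ(k',k,·) is twice continuously differentiable and its second derivative satisfies ‖D²_ξ φ(k',k,ξ)‖ ≤ L_{Hf} Σ_{j=0}^{k'−1} L_f^{k'−1+j} for all ξ ∈ ℝ^d. -/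
noncomputable section

section Aux

variable {E : Type*} [NormedAddCommGroup E] [NormedSpace ℝ E]

lemma norm_iteratedFDeriv_two (F : E → E) (x : E) :
    ‖iteratedFDeriv ℝ 2 F x‖ = ‖fderiv ℝ (fderiv ℝ F) x‖ := by
  rw [show (2:ℕ) = 1+1 from rfl, ← norm_iteratedFDeriv_fderiv,
    show (1:ℕ) = 0+1 from rfl, ← norm_iteratedFDeriv_fderiv, norm_iteratedFDeriv_zero]

open ContinuousLinearMap in
lemma norm_compL_apply_le (a : E →L[ℝ] E) : ‖compL ℝ E E E a‖ ≤ ‖a‖ := by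
  calc ‖compL ℝ E E E a‖ ≤ ‖compL ℝ E E E‖ * ‖a‖ := le_opNorm _ _
  _ ≤ 1 * ‖a‖ := by gcongr; exact norm_compL_le ℝ E E E
  _ = ‖a‖ := one_mul _

open ContinuousLinearMap in
lemma norm_compL_flip_apply_le (b : E →L[ℝ] E) : ‖(compL ℝ E E E).flip b‖ ≤ ‖b‖ := by
  calc ‖(compL ℝ E E E).flip b‖ ≤ ‖(compL ℝ E E E).flip‖ * ‖b‖ := le_opNorm _ _
  _ ≤ 1 * ‖b‖ := by gcongr; rw [opNorm_flip]; exact norm_compL_le ℝ E E E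
  _ = ‖b‖ := one_mul _

open ContinuousLinearMap in
/-- Second-derivative bound for a composition. -/
lemma norm_iteratedFDeriv_two_comp_le (g h : E → E)
    (hg : ContDiff ℝ 2 g) (hh : ContDiff ℝ 2 h)
    (a1 a2 b1 b2 : ℝ)
    (ha1 : ∀ y, ‖fderiv ℝ g y‖ ≤ a1) (ha2 : ∀ y, ‖iteratedFDeriv ℝ 2 g y‖ ≤ a2)
    (hb1 : ∀ x, ‖fderiv ℝ h x‖ ≤ b1) (hb2 : ∀ x, ‖iteratedFDeriv ℝ 2 h x‖ ≤ b2)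
    (x : E) :
    ‖iteratedFDeriv ℝ 2 (g ∘ h) x‖ ≤ a2 * b1 ^ 2 + a1 * b2 := by
  have hb1n : 0 ≤ b1 := le_trans (norm_nonneg _) (hb1 x)
  have hgd : Differentiable ℝ g := hg.differentiable two_ne_zero
  have hhd : Differentiable ℝ h := hh.differentiable two_ne_zero
  have hg' : ContDiff ℝ 1 (fderiv ℝ g) := hg.fderiv_right le_rfl
  have hh' : ContDiff ℝ 1 (fderiv ℝ h) := hh.fderiv_right le_rfl
  -- the function `c x = fderiv g (h x)`
  set c : E → (E →L[ℝ] E) := fun y => fderiv ℝ g (h y) with hc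
  have hcd : Differentiable ℝ c := (hg'.differentiable one_ne_zero).comp hhd
  have hdd : Differentiable ℝ (fderiv ℝ h) := hh'.differentiable one_ne_zero
  have hfd1 : fderiv ℝ (g ∘ h) = fun y => (c y).comp (fderiv ℝ h y) :=
    funext fun y => fderiv_comp y (hgd _) (hhd _)
  rw [norm_iteratedFDeriv_two, hfd1, fderiv_clm_comp (hcd x) (hdd x)]
  have hcder : fderiv ℝ c x = (fderiv ℝ (fderiv ℝ g) (h x)).comp (fderiv ℝ h x) :=
    fderiv_comp x ((hg'.differentiable one_ne_zero) _) (hhd _)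
  have hcnorm : ‖fderiv ℝ c x‖ ≤ a2 * b1 := by
    rw [hcder]
    calc ‖(fderiv ℝ (fderiv ℝ g) (h x)).comp (fderiv ℝ h x)‖
        ≤ ‖fderiv ℝ (fderiv ℝ g) (h x)‖ * ‖fderiv ℝ h x‖ := opNorm_comp_le _ _
      _ ≤ a2 * b1 := by
          apply mul_le_mul _ (hb1 x) (norm_nonneg _)
            (le_trans (norm_nonneg _) (ha2 (h x)))
          rw [← norm_iteratedFDeriv_two]; exact ha2 (h x)
  calc ‖((compL ℝ E E E (c x)).comp (fderiv ℝ (fderiv ℝ h) x)) +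
        (((compL ℝ E E E).flip (fderiv ℝ h x)).comp (fderiv ℝ c x))‖
      ≤ ‖(compL ℝ E E E (c x)).comp (fderiv ℝ (fderiv ℝ h) x)‖ +
        ‖((compL ℝ E E E).flip (fderiv ℝ h x)).comp (fderiv ℝ c x)‖ := norm_add_le _ _
    _ ≤ ‖compL ℝ E E E (c x)‖ * ‖fderiv ℝ (fderiv ℝ h) x‖ +
        ‖(compL ℝ E E E).flip (fderiv ℝ h x)‖ * ‖fderiv ℝ c x‖ :=
        add_le_add (opNorm_comp_le _ _) (opNorm_comp_le _ _)
    _ ≤ ‖c x‖ * ‖fderiv ℝ (fderiv ℝ h) x‖ + ‖fderiv ℝ h x‖ * ‖fderiv ℝ c x‖ := by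
        gcongr
        · exact norm_compL_apply_le _
        · exact norm_compL_flip_apply_le _
    _ ≤ a1 * b2 + b1 * (a2 * b1) := by
        gcongr
        · exact le_trans (norm_nonneg _) (ha1 (h x))
        · exact ha1 (h x)
        · rw [← norm_iteratedFDeriv_two]; exact hb2 x
        · exact hb1 x
    _ = a2 * b1 ^ 2 + a1 * b2 := by ring

end Aux

/-- if each `f_k` is twice continuously differentiable with `‖Df_k(x)‖ ≤ L_f`
and `‖D²f_k(x)‖ ≤ L_{Hf}`, then for every `k` and `k' ≥ 1` the flow map `φ(k',k,·)` is twice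
continuously differentiable and `‖D²_ξ φ(k',k,ξ)‖ ≤ L_{Hf} Σ_{j=0}^{k'−1} L_f^{k'−1+j}`. -/
theorem stmt9 (d : ℕ)
    (f : ℕ → EuclideanSpace ℝ (Fin d) → EuclideanSpace ℝ (Fin d))
    (Lf LHf : ℝ)
    (hf : ∀ k, ContDiff ℝ 2 (f k))
    (hDf : ∀ (k : ℕ) (x : EuclideanSpace ℝ (Fin d)), ‖fderiv ℝ (f k) x‖ ≤ Lf)
    (hD2f : ∀ (k : ℕ) (x : EuclideanSpace ℝ (Fin d)),
      ‖iteratedFDeriv ℝ 2 (f k) x‖ ≤ LHf) :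
    ∀ (k k' : ℕ), 1 ≤ k' →
      ContDiff ℝ 2 (flow f k' k) ∧
      ∀ ξ, ‖iteratedFDeriv ℝ 2 (flow f k' k) ξ‖ ≤
        LHf * ∑ j ∈ Finset.range k', Lf ^ (k' - 1 + j) := by
  have hLf : 0 ≤ Lf := le_trans (norm_nonneg _) (hDf 0 0)
  -- smoothness of the flow for all k'
  have hsmooth : ∀ k' k, ContDiff ℝ 2 (flow f k' k) := by
    intro k'
    induction k' with
    | zero => intro k; exact contDiff_id
    | succ n ih =>
      intro k
      have heq : flow f (n+1) k = (f (k + n)) ∘ (flow f n k) := rfl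
      rw [heq]
      exact (hf (k + n)).comp (ih k)
  -- first-derivative bound
  have hD1 : ∀ k' k (ξ : EuclideanSpace ℝ (Fin d)),
      ‖fderiv ℝ (flow f k' k) ξ‖ ≤ Lf ^ k' := by
    intro k'
    induction k' with
    | zero =>
      intro k ξ
      have : flow f 0 k = (id : EuclideanSpace ℝ (Fin d) → EuclideanSpace ℝ (Fin d)) := rfl
      rw [this, fderiv_id, pow_zero]
      exact ContinuousLinearMap.norm_id_le
    | succ n ih =>
      intro k ξ
      have heq : flow f (n+1) k = (f (k + n)) ∘ (flow f n k) := rfl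
      rw [heq, fderiv_comp ξ ((hf _).differentiable two_ne_zero _)
        ((hsmooth n k).differentiable two_ne_zero _)]
      calc ‖(fderiv ℝ (f (k+n)) (flow f n k ξ)).comp (fderiv ℝ (flow f n k) ξ)‖
          ≤ ‖fderiv ℝ (f (k+n)) (flow f n k ξ)‖ * ‖fderiv ℝ (flow f n k) ξ‖ :=
            ContinuousLinearMap.opNorm_comp_le _ _
        _ ≤ Lf * Lf ^ n := mul_le_mul (hDf _ _) (ih k ξ) (norm_nonneg _) hLf
        _ = Lf ^ (n+1) := (pow_succ' Lf n).symm
  -- main statement by induction from k' = 1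
  intro k k' hk'
  refine ⟨hsmooth k' k, ?_⟩
  induction k' with
  | zero => omega
  | succ n ih =>
    rcases Nat.eq_zero_or_pos n with hn | hn
    · subst hn
      intro ξ
      have heq : flow f 1 k = f k := by
        funext x; simp [flow]
      rw [heq]
      simpa using hD2f k ξ
    · intro ξ
      have heq : flow f (n+1) k = (f (k + n)) ∘ (flow f n k) := rfl
      have key := norm_iteratedFDeriv_two_comp_le (f (k+n)) (flow f n k)
        (hf _) (hsmooth n k) Lf LHf (Lf ^ n)
        (LHf * ∑ j ∈ Finset.range n, Lf ^ (n - 1 + j))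
        (hDf _) (hD2f _) (hD1 n k) (ih hn) ξ
      rw [heq]
      refine le_trans key (le_of_eq ?_)
      -- algebra: LHf * (Lf^n)^2 + Lf * (LHf * Σ_{j<n} Lf^(n-1+j)) = LHf * Σ_{j<n+1} Lf^(n+j)
      have hsum : Lf * ∑ j ∈ Finset.range n, Lf ^ (n - 1 + j)
          = ∑ j ∈ Finset.range n, Lf ^ (n + j) := by
        rw [Finset.mul_sum]
        refine Finset.sum_congr rfl fun j _ => ?_
        rw [← pow_succ']
        congr 1
        omega
      have h2 : (Lf ^ n) ^ 2 = Lf ^ (n + n) := by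
        rw [← pow_mul]; congr 1; omega
      rw [Finset.sum_range_succ]
      have hexp : ∀ j, n + 1 - 1 + j = n + j := fun j => by omega
      simp only [hexp]
      rw [mul_add, ← hsum, h2]
      ring

end
end

section
/- Suppose each f_k is twice continuously differentiable with ‖Df_k(x)‖ ≤ L_f and ‖D²f_k(x)‖ ≤ L_{Hf} uniformly in k and x, and the map x ↦ dm(x, x_*) is twice continuously differentiable with ‖∇_x dm(x,x_*)‖ ≤ L_dm and ‖D²_x dm(x,x_*)‖ ≤ L_{Hdm} for all x. Fix an integer M ≥ K and define Ṽ(k,ξ) := Σ_{k'=0}^{M} Φ(k,k') dm(φ(k',k,ξ), x_*). Then each Ṽ(k,·) is twice continuously differentiable and there exists a constant L_H > 0, independent of k, such that ‖D²_ξ Ṽ(k,ξ)‖ ≤ L_H for all k ∈ ℕ and all ξ ∈ ℝ^d. -/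
noncomputable section

section Aux
variable {E F G : Type*} [NormedAddCommGroup E] [NormedSpace ℝ E]
  [NormedAddCommGroup F] [NormedSpace ℝ F] [NormedAddCommGroup G] [NormedSpace ℝ G]

lemma norm_iter1 (h : E → F) (x : E) : ‖iteratedFDeriv ℝ 1 h x‖ = ‖fderiv ℝ h x‖ := by
  rw [← norm_iteratedFDeriv_fderiv (n := 0), norm_iteratedFDeriv_zero]

lemma iter_sub_const {n : ℕ} (hn : n ≠ 0) {h : E → F} (hh : ContDiff ℝ n h) (c : F) (x : E) :
    iteratedFDeriv ℝ n (fun z => h z - c) x = iteratedFDeriv ℝ n h x := by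
  have h1 : ContDiff ℝ n (fun z => h z - c) := hh.sub contDiff_const
  have h2 : ContDiff ℝ n (fun _ : E => c) := contDiff_const
  have key := iteratedFDeriv_add_apply (𝕜 := ℝ) (i := n)
    (f := fun z => h z - c) (g := fun _ : E => c) (x := x) h1.contDiffAt h2.contDiffAt
  have hfg : (fun z => h z - c) + (fun _ : E => c) = h := by funext z; simp
  rw [hfg] at key
  rw [key, iteratedFDeriv_const_of_ne hn]
  simp

lemma comp_iter1_bound {g : F → G} {f : E → F} (hg : ContDiff ℝ 2 g) (hf : ContDiff ℝ 2 f)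
    {C1 D1 : ℝ}
    (hC1 : ∀ y, ‖iteratedFDeriv ℝ 1 g y‖ ≤ C1)
    (hD1 : ∀ x, ‖iteratedFDeriv ℝ 1 f x‖ ≤ D1) (x : E) :
    ‖iteratedFDeriv ℝ 1 (fun z => g (f z)) x‖ ≤ C1 * D1 := by
  rw [norm_iter1]
  have hdf : DifferentiableAt ℝ f x := (hf.differentiable two_ne_zero).differentiableAt
  have hdg : DifferentiableAt ℝ g (f x) := (hg.differentiable two_ne_zero).differentiableAt
  rw [show (fun z => g (f z)) = g ∘ f from rfl, fderiv_comp x hdg hdf]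
  calc ‖(fderiv ℝ g (f x)).comp (fderiv ℝ f x)‖ ≤ ‖fderiv ℝ g (f x)‖ * ‖fderiv ℝ f x‖ :=
        ContinuousLinearMap.opNorm_comp_le _ _
    _ ≤ C1 * D1 := by
        have h1 := hC1 (f x); rw [norm_iter1] at h1
        have h2 := hD1 x; rw [norm_iter1] at h2
        exact mul_le_mul h1 h2 (norm_nonneg _) (le_trans (norm_nonneg _) h1)

lemma comp_iter2_bound {g : F → G} {f : E → F} (hg : ContDiff ℝ 2 g) (hf : ContDiff ℝ 2 f)
    {C1 C2 D1 D2 : ℝ}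
    (hC1 : ∀ y, ‖iteratedFDeriv ℝ 1 g y‖ ≤ C1) (hC2 : ∀ y, ‖iteratedFDeriv ℝ 2 g y‖ ≤ C2)
    (hD1 : ∀ x, ‖iteratedFDeriv ℝ 1 f x‖ ≤ D1) (hD2 : ∀ x, ‖iteratedFDeriv ℝ 2 f x‖ ≤ D2)
    (x : E) :
    ‖iteratedFDeriv ℝ 2 (fun z => g (f z)) x‖ ≤ 2 * max C1 C2 * (max D1 D2 + 1) ^ 2 := by
  have hD1n : 0 ≤ D1 := le_trans (norm_nonneg _) (hD1 x)
  have hDge1 : (1 : ℝ) ≤ max D1 D2 + 1 := by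
    have : (0:ℝ) ≤ max D1 D2 := le_trans hD1n (le_max_left _ _)
    linarith
  set g' : F → G := fun y => g y - g (f x) with hg'def
  have hg' : ContDiff ℝ 2 g' := hg.sub contDiff_const
  have hcomp : ContDiff ℝ 2 (fun z => g (f z)) := hg.comp hf
  have key : iteratedFDeriv ℝ 2 (fun z => g (f z)) x = iteratedFDeriv ℝ 2 (g' ∘ f) x := by
    have : g' ∘ f = fun z => (fun z => g (f z)) z - g (f x) := rfl
    rw [this, iter_sub_const (by norm_num) hcomp (g (f x)) x]
  rw [key]
  have main := norm_iteratedFDeriv_comp_le (𝕜 := ℝ) (n := 2) (N := 2) hg' hf le_rfl x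
    (C := max C1 C2) (D := max D1 D2 + 1) ?_ ?_
  · refine le_trans main (le_of_eq ?_)
    norm_num [Nat.factorial]
  · intro i hi
    interval_cases i
    · rw [norm_iteratedFDeriv_zero]
      have : g' (f x) = 0 := by simp [hg'def]
      rw [this, norm_zero]
      exact le_trans (le_trans (norm_nonneg _) (hC1 (f x))) (le_max_left _ _)
    · rw [hg'def, iter_sub_const (n := 1) (by norm_num) (hg.of_le (by norm_num)) (g (f x)) (f x)]
      exact le_trans (hC1 (f x)) (le_max_left _ _)
    · rw [hg'def, iter_sub_const (n := 2) (by norm_num) hg (g (f x)) (f x)]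
      exact le_trans (hC2 (f x)) (le_max_right _ _)
  · intro i hi1 hi2
    interval_cases i
    · rw [pow_one]
      exact le_trans (hD1 x) (by linarith [le_max_left D1 D2])
    · have : max D1 D2 + 1 ≤ (max D1 D2 + 1)^2 := le_self_pow₀ (by linarith) (by norm_num)
      exact le_trans (hD2 x) (le_trans (by linarith [le_max_right D1 D2]) this)

end Aux

/-- under twice-continuous-differentiability and uniform derivative bounds on
`f_k` and on `x ↦ dm(x,x_*)`, for `M ≥ K` the function
`Ṽ(k,ξ) := Σ_{k'=0}^{M} Φ(k,k') dm(φ(k',k,ξ), x_*)` is twice continuously differentiable in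
`ξ` and there is a constant `L_H > 0`, independent of `k`, with `‖D²_ξ Ṽ(k,ξ)‖ ≤ L_H`. -/
theorem stmt10 (d : ℕ)
    (f : ℕ → EuclideanSpace ℝ (Fin d) → EuclideanSpace ℝ (Fin d))
    (Lf LHf : ℝ)
    (hf : ∀ k, ContDiff ℝ 2 (f k))
    (hDf : ∀ (k : ℕ) (x : EuclideanSpace ℝ (Fin d)), ‖fderiv ℝ (f k) x‖ ≤ Lf)
    (hD2f : ∀ (k : ℕ) (x : EuclideanSpace ℝ (Fin d)),
      ‖iteratedFDeriv ℝ 2 (f k) x‖ ≤ LHf)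
    (dm : EuclideanSpace ℝ (Fin d) → EuclideanSpace ℝ (Fin d) → ℝ)
    (dm_nonneg : ∀ x y, 0 ≤ dm x y)
    (xs : EuclideanSpace ℝ (Fin d))
    (Ldm LHdm : ℝ)
    (hdm_smooth : ContDiff ℝ 2 (fun x => dm x xs))
    (hdm_grad : ∀ x, ‖fderiv ℝ (fun x => dm x xs) x‖ ≤ Ldm)
    (hdm_hess : ∀ x, ‖iteratedFDeriv ℝ 2 (fun x => dm x xs) x‖ ≤ LHdm)
    (c0 : ℝ) (hc0 : 0 < c0)
    (τ : ℕ → ℝ) (hτpos : ∀ i, 0 < τ i) (hτmono : Monotone τ)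
    (hconv : ∀ (k k' : ℕ) (ξ : EuclideanSpace ℝ (Fin d)),
      dm (flow f k' k ξ) xs ≤ c0 * (∏ i ∈ Finset.Ico k (k + k'), τ i) * dm ξ xs)
    (K : ℕ) (hK : 0 < K)
    (hconvK : ∀ (k k' : ℕ) (ξ : EuclideanSpace ℝ (Fin d)), K ≤ k' →
      dm (flow f k' k ξ) xs ≤ (∏ i ∈ Finset.Ico k (k + k'), τ i) * dm ξ xs)
    (M : ℕ) (hM : K ≤ M) :
    (∀ k : ℕ, ContDiff ℝ 2 (fun ξ => ∑ k' ∈ Finset.range (M + 1),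
        (∏ i ∈ Finset.Ico k (k + k'), τ i)⁻¹ * dm (flow f k' k ξ) xs)) ∧
    ∃ LH > (0 : ℝ), ∀ (k : ℕ) (ξ : EuclideanSpace ℝ (Fin d)),
      ‖iteratedFDeriv ℝ 2 (fun ξ => ∑ k' ∈ Finset.range (M + 1),
          (∏ i ∈ Finset.Ico k (k + k'), τ i)⁻¹ * dm (flow f k' k ξ) xs) ξ‖ ≤ LH := by
  classical
  -- smoothness of the flow
  have flowCD : ∀ k' k : ℕ, ContDiff ℝ 2 (flow f k' k) := by
    intro k'
    induction k' with
    | zero => intro k; exact contDiff_id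
    | succ n ih =>
      intro k
      have : flow f (n + 1) k = fun ξ => f (k + n) (flow f n k ξ) := rfl
      rw [this]
      exact (hf (k + n)).comp (ih k)
  -- first part: smoothness of the sum
  have part1 : ∀ k : ℕ, ContDiff ℝ 2 (fun ξ => ∑ k' ∈ Finset.range (M + 1),
      (∏ i ∈ Finset.Ico k (k + k'), τ i)⁻¹ * dm (flow f k' k ξ) xs) := by
    intro k
    exact ContDiff.sum fun j _ => contDiff_const.mul (hdm_smooth.comp (flowCD j k))
  refine ⟨part1, ?_⟩
  -- nonnegativity of the constants
  have hLf0 : 0 ≤ Lf := le_trans (norm_nonneg _) (hDf 0 0)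
  have hLdm0 : 0 ≤ Ldm := le_trans (norm_nonneg _) (hdm_grad 0)
  -- iterated-derivative form of the bounds on f
  have hf1 : ∀ (k : ℕ) (x : EuclideanSpace ℝ (Fin d)), ‖iteratedFDeriv ℝ 1 (f k) x‖ ≤ Lf := by
    intro k x; rw [norm_iter1]; exact hDf k x
  have hdm1 : ∀ y : EuclideanSpace ℝ (Fin d), ‖iteratedFDeriv ℝ 1 (fun x => dm x xs) y‖ ≤ Ldm := by
    intro y; rw [norm_iter1]; exact hdm_grad y
  -- uniform bounds on the derivatives of the flow up to time M
  have flowB : ∃ B1 B2 : ℝ, 0 ≤ B1 ∧ 0 ≤ B2 ∧ ∀ k' ≤ M, ∀ (k : ℕ) (x : EuclideanSpace ℝ (Fin d)),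
      ‖iteratedFDeriv ℝ 1 (flow f k' k) x‖ ≤ B1 ∧
      ‖iteratedFDeriv ℝ 2 (flow f k' k) x‖ ≤ B2 := by
    suffices h : ∀ n : ℕ, ∃ B1 B2 : ℝ, 0 ≤ B1 ∧ 0 ≤ B2 ∧ ∀ k' ≤ n, ∀ (k : ℕ) (x : EuclideanSpace ℝ (Fin d)),
        ‖iteratedFDeriv ℝ 1 (flow f k' k) x‖ ≤ B1 ∧
        ‖iteratedFDeriv ℝ 2 (flow f k' k) x‖ ≤ B2 from h M
    intro n
    induction n with
    | zero =>
      refine ⟨1, 0, zero_le_one, le_rfl, ?_⟩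
      intro k' hk' k x
      interval_cases k'
      constructor
      · have h1 : flow f 0 k = fun ξ : EuclideanSpace ℝ (Fin d) => ξ := rfl
        rw [h1, norm_iter1]
        have : fderiv ℝ (fun ξ : EuclideanSpace ℝ (Fin d) => ξ) x = ContinuousLinearMap.id ℝ (EuclideanSpace ℝ (Fin d)) := fderiv_id'
        rw [this]
        exact ContinuousLinearMap.norm_id_le
      · have h1 : flow f 0 k = fun ξ : EuclideanSpace ℝ (Fin d) => ξ := rfl
        rw [h1, ← norm_iteratedFDeriv_fderiv (n := 1)]
        have h2 : fderiv ℝ (fun ξ : EuclideanSpace ℝ (Fin d) => ξ) = fun _ : EuclideanSpace ℝ (Fin d) => ContinuousLinearMap.id ℝ (EuclideanSpace ℝ (Fin d)) := by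
          funext y; exact fderiv_id'
        rw [h2, norm_iter1, fderiv_const_apply, norm_zero]
    | succ n ih =>
      obtain ⟨B1, B2, hB1, hB2, hB⟩ := ih
      refine ⟨max B1 (Lf * B1), max B2 (2 * max Lf LHf * (max B1 B2 + 1) ^ 2),
        le_trans hB1 (le_max_left _ _), le_trans hB2 (le_max_left _ _), ?_⟩
      intro k' hk' k x
      rcases Nat.lt_succ_iff_lt_or_eq.mp (Nat.lt_succ_of_le hk') with h | h
      · have hk'n : k' ≤ n := Nat.lt_succ_iff.mp h
        exact ⟨le_trans (hB k' hk'n k x).1 (le_max_left _ _),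
          le_trans (hB k' hk'n k x).2 (le_max_left _ _)⟩
      · subst h
        have hrw : flow f (n + 1) k = fun ξ => f (k + n) (flow f n k ξ) := rfl
        rw [hrw]
        constructor
        · refine le_trans (comp_iter1_bound (hf (k + n)) (flowCD n k) (hf1 (k + n))
            (fun y => (hB n le_rfl k y).1) x) (le_trans ?_ (le_max_right _ _))
          exact le_rfl
        · exact le_trans (comp_iter2_bound (hf (k + n)) (flowCD n k) (hf1 (k + n))
            (hD2f (k + n)) (fun y => (hB n le_rfl k y).1) (fun y => (hB n le_rfl k y).2) x)
            (le_max_right _ _)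
  obtain ⟨B1, B2, hB1, hB2, hB⟩ := flowB
  -- uniform bound on the second derivative of each term
  set T2 : ℝ := 2 * max Ldm LHdm * (max B1 B2 + 1) ^ 2 with hT2def
  have hT2nonneg : 0 ≤ T2 := by
    have h1 : (0:ℝ) ≤ max Ldm LHdm := le_trans hLdm0 (le_max_left _ _)
    have h2 : (0:ℝ) ≤ (max B1 B2 + 1) ^ 2 := sq_nonneg _
    positivity
  have hterm : ∀ k' ≤ M, ∀ (k : ℕ) (x : EuclideanSpace ℝ (Fin d)),
      ‖iteratedFDeriv ℝ 2 (fun ξ => dm (flow f k' k ξ) xs) x‖ ≤ T2 := by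
    intro k' hk' k x
    exact comp_iter2_bound hdm_smooth (flowCD k' k) hdm1 hdm_hess
      (fun y => (hB k' hk' k y).1) (fun y => (hB k' hk' k y).2) x
  -- bound on the weights Φ(k,k')
  set P : ℝ := (max 1 (τ 0)⁻¹) ^ M with hPdef
  have hPbase : (1:ℝ) ≤ max 1 (τ 0)⁻¹ := le_max_left _ _
  have hP1 : (1:ℝ) ≤ P := one_le_pow₀ hPbase
  have hΦ : ∀ (k : ℕ) (k' : ℕ), k' ≤ M → (∏ i ∈ Finset.Ico k (k + k'), τ i)⁻¹ ≤ P := by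
    intro k k' hk'
    have hprodpos : 0 < ∏ i ∈ Finset.Ico k (k + k'), τ i :=
      Finset.prod_pos fun i _ => hτpos i
    have hpow : (τ 0 : ℝ) ^ k' ≤ ∏ i ∈ Finset.Ico k (k + k'), τ i := by
      calc (τ 0 : ℝ) ^ k' = ∏ _i ∈ Finset.Ico k (k + k'), τ 0 := by
            rw [Finset.prod_const, Nat.card_Ico]; congr 1; omega
        _ ≤ ∏ i ∈ Finset.Ico k (k + k'), τ i :=
            Finset.prod_le_prod (fun i _ => (hτpos 0).le) (fun i _ => hτmono (Nat.zero_le i))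
    calc (∏ i ∈ Finset.Ico k (k + k'), τ i)⁻¹ ≤ ((τ 0 : ℝ) ^ k')⁻¹ :=
          inv_anti₀ (pow_pos (hτpos 0) _) hpow
      _ = ((τ 0)⁻¹) ^ k' := by rw [inv_pow]
      _ ≤ (max 1 (τ 0)⁻¹) ^ k' :=
          pow_le_pow_left₀ (inv_nonneg.mpr (hτpos 0).le) (le_max_right _ _) _
      _ ≤ P := pow_le_pow_right₀ hPbase hk'
  -- final bound
  refine ⟨(M + 1) * (P * T2) + 1, by positivity, ?_⟩
  intro k ξ
  have hterms_cd : ∀ j ∈ Finset.range (M + 1), ContDiff ℝ (2:ℕ)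
      (fun ξ => (∏ i ∈ Finset.Ico k (k + j), τ i)⁻¹ * dm (flow f j k ξ) xs) :=
    fun j _ => contDiff_const.mul (hdm_smooth.comp (flowCD j k))
  have hrw := iteratedFDeriv_sum (𝕜 := ℝ) (i := 2)
    (f := fun j ξ => (∏ i ∈ Finset.Ico k (k + j), τ i)⁻¹ * dm (flow f j k ξ) xs)
    (u := Finset.range (M + 1)) hterms_cd
  have hfun : (fun ξ => ∑ k' ∈ Finset.range (M + 1),
      (∏ i ∈ Finset.Ico k (k + k'), τ i)⁻¹ * dm (flow f k' k ξ) xs)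
      = (∑ j ∈ Finset.range (M + 1),
        (fun j ξ => (∏ i ∈ Finset.Ico k (k + j), τ i)⁻¹ * dm (flow f j k ξ) xs) j ·) := rfl
  rw [hfun, hrw]
  simp only [Finset.sum_apply]
  refine le_trans (norm_sum_le _ _) ?_
  have hjb : ∀ j ∈ Finset.range (M + 1),
      ‖iteratedFDeriv ℝ 2
        (fun ξ => (∏ i ∈ Finset.Ico k (k + j), τ i)⁻¹ * dm (flow f j k ξ) xs) ξ‖ ≤ P * T2 := by
    intro j hj
    have hjM : j ≤ M := Nat.lt_succ_iff.mp (Finset.mem_range.mp hj)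
    set c : ℝ := (∏ i ∈ Finset.Ico k (k + j), τ i)⁻¹ with hcdef
    have hcpos : 0 < c := inv_pos.mpr (Finset.prod_pos fun i _ => hτpos i)
    have hsmul := iteratedFDeriv_const_smul_apply' (𝕜 := ℝ) (i := 2) (a := c)
      (f := fun ξ => dm (flow f j k ξ) xs) (x := ξ) (hdm_smooth.comp (flowCD j k)).contDiffAt
    have heq : (fun ξ => c * dm (flow f j k ξ) xs)
        = fun ξ => c • dm (flow f j k ξ) xs := by
      funext z; simp [smul_eq_mul]
    rw [heq, hsmul, norm_smul]
    have h1 : ‖c‖ ≤ P := by rw [Real.norm_eq_abs, abs_of_pos hcpos]; exact hΦ k j hjM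
    exact mul_le_mul h1 (hterm j hjM k ξ) (norm_nonneg _) (le_trans zero_le_one hP1)
  calc ∑ j ∈ Finset.range (M + 1), ‖iteratedFDeriv ℝ 2
        (fun ξ => (∏ i ∈ Finset.Ico k (k + j), τ i)⁻¹ * dm (flow f j k ξ) xs) ξ‖
      ≤ ∑ _j ∈ Finset.range (M + 1), (P * T2) := Finset.sum_le_sum hjb
    _ = (M + 1) * (P * T2) := by
        rw [Finset.sum_const, Finset.card_range, nsmul_eq_mul]; push_cast; ring
    _ ≤ (M + 1) * (P * T2) + 1 := by linarith

end
end

section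
/- Suppose in addition that Ṽ(k+1,·) is twice continuously differentiable with ‖D²_x Ṽ(k+1,x)‖ ≤ L_H for all x ∈ ℝ^d, that Ṽ(k+1, f_k(ξ)) ≤ τ(k) Ṽ(k,ξ) for all ξ, and that the disturbed dynamics have the affine form g_k(x,e) = f_k(x) + A_k e with ‖A_k‖ ≤ L_{e,k}. Let n be a random vector on a probability space with values in ℝ^m satisfying E[n] = 0 and E[|n|²] ≤ σ². Then for every z ∈ ℝ^d, E[Ṽ(k+1, f_k(z) + A_k n)] ≤ τ(k) Ṽ(k,z) + (1/2) L_H L_{e,k}² σ². -/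
open MeasureTheory

noncomputable section

theorem my_norm_fd1 {E F : Type*} [NormedAddCommGroup E] [NormedSpace ℝ E]
    [NormedAddCommGroup F] [NormedSpace ℝ F]
    (g : E → F) (x : E) : ‖iteratedFDeriv ℝ 1 g x‖ = ‖fderiv ℝ g x‖ := by
  rw [← norm_iteratedFDeriv_fderiv (n := 0), norm_iteratedFDeriv_zero]

theorem taylor2_upper {E : Type*} [NormedAddCommGroup E] [NormedSpace ℝ E]
    {V : E → ℝ} {L : ℝ} (hV : ContDiff ℝ 2 V)
    (hL : ∀ x, ‖iteratedFDeriv ℝ 2 V x‖ ≤ L) (a v : E) :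
    V (a + v) ≤ V a + fderiv ℝ V a v + L / 2 * ‖v‖ ^ 2 := by
  have hV1 : Differentiable ℝ V := hV.differentiable (by norm_num)
  have hdV : ContDiff ℝ 1 (fderiv ℝ V) := hV.fderiv_right (by norm_num)
  have hlip : ∀ x y : E, ‖fderiv ℝ V x - fderiv ℝ V y‖ ≤ L * ‖x - y‖ := by
    intro x y
    refine Convex.norm_image_sub_le_of_norm_fderiv_le
      (fun z _ => (hdV.differentiable (by norm_num)) z)
      (fun z _ => ?_) convex_univ (Set.mem_univ y) (Set.mem_univ x)
    rw [← my_norm_fd1, norm_iteratedFDeriv_fderiv]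
    exact hL z
  set g : ℝ → ℝ := fun t => fderiv ℝ V (a + t • v) v with hg
  have hline : ∀ t : ℝ, HasDerivAt (fun s : ℝ => a + s • v) v t := fun t =>
    ((hasDerivAt_id t).smul_const v).const_add a |>.congr_deriv (one_smul ℝ v)
  have hφ : ∀ t : ℝ, HasDerivAt (fun s : ℝ => V (a + s • v)) (g t) t := fun t =>
    ((hV1 _).hasFDerivAt.comp_hasDerivAt t (hline t))
  have hgcont : Continuous g := by
    apply Continuous.clm_apply ?_ continuous_const
    exact (hV.continuous_fderiv (by norm_num)).comp (by continuity : Continuous fun t : ℝ => a + t • v)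
  have hftc : ∫ t in (0:ℝ)..1, g t = V (a + v) - V a := by
    have := intervalIntegral.integral_eq_sub_of_hasDerivAt (f := fun s : ℝ => V (a + s • v))
      (fun t _ => hφ t) (hgcont.intervalIntegrable 0 1)
    simpa using this
  have hbound : ∀ t ∈ Set.Icc (0:ℝ) 1, g t ≤ fderiv ℝ V a v + (L * ‖v‖ ^ 2) * t := by
    intro t ht
    have h1 : g t - fderiv ℝ V a v = (fderiv ℝ V (a + t • v) - fderiv ℝ V a) v := by
      simp [hg]
    have h2 : (fderiv ℝ V (a + t • v) - fderiv ℝ V a) v ≤ L * ‖t • v‖ * ‖v‖ := by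
      calc (fderiv ℝ V (a + t • v) - fderiv ℝ V a) v
          ≤ ‖fderiv ℝ V (a + t • v) - fderiv ℝ V a‖ * ‖v‖ := by
            exact (le_abs_self _).trans (((fderiv ℝ V (a + t • v) - fderiv ℝ V a)).le_opNorm v)
        _ ≤ L * ‖t • v‖ * ‖v‖ := by
            have := hlip (a + t • v) a
            simp only [add_sub_cancel_left] at this
            exact mul_le_mul_of_nonneg_right this (norm_nonneg v)
    have h3 : ‖t • v‖ = t * ‖v‖ := by
      rw [norm_smul, Real.norm_eq_abs, abs_of_nonneg ht.1]
    have h4 : L * ‖t • v‖ * ‖v‖ = L * ‖v‖ ^ 2 * t := by rw [h3]; ring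
    linarith
  have hint : ∫ t in (0:ℝ)..1, g t ≤ ∫ t in (0:ℝ)..1, (fderiv ℝ V a v + (L * ‖v‖ ^ 2) * t) := by
    apply intervalIntegral.integral_mono_on zero_le_one (hgcont.intervalIntegrable 0 1)
      (by apply Continuous.intervalIntegrable; continuity) hbound
  have hcalc : ∫ t in (0:ℝ)..1, (fderiv ℝ V a v + (L * ‖v‖ ^ 2) * t)
      = fderiv ℝ V a v + L / 2 * ‖v‖ ^ 2 := by
    rw [intervalIntegral.integral_add (by apply Continuous.intervalIntegrable; continuity)
      (by apply Continuous.intervalIntegrable; continuity),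
      intervalIntegral.integral_const_mul, integral_id]
    simp; ring
  linarith [hftc ▸ hint, hcalc ▸ hint]

set_option maxHeartbeats 1000000 in
/-- if `Ṽ(k+1,·)` is twice continuously differentiable with Hessian bounded by
`L_H`, decreases along the nominal dynamics at rate `τ(k)`, and the disturbed dynamics are
affine, `g_k(x,e) = f_k(x) + A_k e` with `‖A_k‖ ≤ L_{e,k}`, then for a zero-mean random
vector `n` with `E[|n|²] ≤ σ²`,
`E[Ṽ(k+1, f_k(z) + A_k n)] ≤ τ(k) Ṽ(k,z) + (1/2) L_H L_{e,k}² σ²`. -/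
theorem stmt11 (d m : ℕ)
    {W : Type*} [MeasurableSpace W] (μ : Measure W) [IsProbabilityMeasure μ]
    (f : ℕ → EuclideanSpace ℝ (Fin d) → EuclideanSpace ℝ (Fin d))
    (τ : ℕ → ℝ) (hτpos : ∀ i, 0 < τ i)
    (Vt : ℕ → EuclideanSpace ℝ (Fin d) → ℝ)
    (hVt_nonneg : ∀ k x, 0 ≤ Vt k x)
    (k : ℕ) (LH : ℝ)
    (hVt_smooth : ContDiff ℝ 2 (Vt (k + 1)))
    (hVt_hess : ∀ x, ‖iteratedFDeriv ℝ 2 (Vt (k + 1)) x‖ ≤ LH)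
    (hVt_dec : ∀ ξ, Vt (k + 1) (f k ξ) ≤ τ k * Vt k ξ)
    (A : EuclideanSpace ℝ (Fin m) →L[ℝ] EuclideanSpace ℝ (Fin d))
    (Le : ℝ) (hA : ‖A‖ ≤ Le)
    (n : W → EuclideanSpace ℝ (Fin m))
    (hn_int : Integrable n μ)
    (hn_mean : ∫ ω, n ω ∂μ = 0)
    (hn_sq_int : Integrable (fun ω => ‖n ω‖ ^ 2) μ)
    (σ : ℝ) (hn_var : ∫ ω, ‖n ω‖ ^ 2 ∂μ ≤ σ ^ 2) :
    ∀ z : EuclideanSpace ℝ (Fin d),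
      ∫ ω, Vt (k + 1) (f k z + A (n ω)) ∂μ ≤
        τ k * Vt k z + 1 / 2 * LH * Le ^ 2 * σ ^ 2 := by
  intro z
  set V := Vt (k + 1) with hVdef
  set a := f k z with ha
  have hLH : 0 ≤ LH := le_trans (norm_nonneg _) (hVt_hess 0)
  have hLe : 0 ≤ Le := le_trans (norm_nonneg _) hA
  set B : EuclideanSpace ℝ (Fin m) →L[ℝ] ℝ := (fderiv ℝ V a).comp A with hB
  set G : W → ℝ := fun ω => V a + B (n ω) + LH / 2 * Le ^ 2 * ‖n ω‖ ^ 2 with hG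
  have hGint : Integrable G μ :=
    ((integrable_const (V a)).add (B.integrable_comp hn_int)).add (hn_sq_int.const_mul _)
  have hpt : ∀ ω, V (a + A (n ω)) ≤ G ω := by
    intro ω
    have h1 := taylor2_upper hVt_smooth hVt_hess a (A (n ω))
    have h2 : ‖A (n ω)‖ ^ 2 ≤ Le ^ 2 * ‖n ω‖ ^ 2 := by
      have := A.le_opNorm (n ω)
      have h3 : ‖A (n ω)‖ ≤ Le * ‖n ω‖ :=
        this.trans (mul_le_mul_of_nonneg_right hA (norm_nonneg _))
      nlinarith [norm_nonneg (A (n ω)), norm_nonneg (n ω)]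
    have h4 : fderiv ℝ V a (A (n ω)) = B (n ω) := rfl
    have h5 : LH / 2 * ‖A (n ω)‖ ^ 2 ≤ LH / 2 * (Le ^ 2 * ‖n ω‖ ^ 2) :=
      mul_le_mul_of_nonneg_left h2 (by linarith)
    simp only [hG]
    rw [← h4]
    nlinarith [h1, h5]
  have hmono : ∫ ω, V (a + A (n ω)) ∂μ ≤ ∫ ω, G ω ∂μ := by
    refine integral_mono_of_nonneg (Filter.Eventually.of_forall fun ω => hVt_nonneg _ _) hGint
      (Filter.Eventually.of_forall hpt)
  have i1 : Integrable (fun ω => V a + B (n ω)) μ :=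
    (integrable_const (V a)).add (B.integrable_comp hn_int)
  have e1 : ∫ ω, (V a + B (n ω)) ∂μ = V a := by
    rw [integral_add (integrable_const (V a)) (B.integrable_comp hn_int),
      integral_const, B.integral_comp_comm hn_int, hn_mean]
    simp
  have hGval : ∫ ω, G ω ∂μ = V a + LH / 2 * Le ^ 2 * ∫ ω, ‖n ω‖ ^ 2 ∂μ := by
    rw [hG, integral_add i1 (hn_sq_int.const_mul _), integral_const_mul, e1]
  have hfinal : V a + LH / 2 * Le ^ 2 * ∫ ω, ‖n ω‖ ^ 2 ∂μ ≤
      τ k * Vt k z + 1 / 2 * LH * Le ^ 2 * σ ^ 2 := by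
    have h6 : LH / 2 * Le ^ 2 * ∫ ω, ‖n ω‖ ^ 2 ∂μ ≤ LH / 2 * Le ^ 2 * σ ^ 2 :=
      mul_le_mul_of_nonneg_left hn_var (by positivity)
    have h7 := hVt_dec z
    have : V a ≤ τ k * Vt k z := h7
    nlinarith [h6]
  linarith [hmono, hGval, hfinal]

end
end

section
/- Suppose each f_k is twice continuously differentiable with ‖Df_k(x)‖ ≤ L_f and ‖D²f_k(x)‖ ≤ L_{Hf} uniformly in k and x; the map x ↦ dm(x,x_*) is twice continuously differentiable with ‖∇_x dm(x,x_*)‖ ≤ L_dm and ‖D²_x dm(x,x_*)‖ ≤ L_{Hdm} for all x; and the disturbed dynamics are z_{k+1} = f_k(z_k) + A_k n_k with linear maps A_k satisfying ‖A_k‖ ≤ L_{e,k}, where (n_k)_{k∈ℕ} are independent random vectors in ℝ^m with E[n_k] = 0 and E[|n_k|²] ≤ σ_n². Then there exist constants c̄₀ > 0 and L_H > 0 such that for every deterministic initial condition z₀ ∈ ℝ^d and every k ≥ 1, E[dm(z_k, x_*)] ≤ c̄₀ (∏_{i=0}^{k−1} τ(i)) dm(z₀, x_*) + (1/2) L_H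 σ_n² Σ_{j=0}^{k−1} (∏_{i=j+1}^{k−1} τ(i)) L_{e,j}². -/
open MeasureTheory ProbabilityTheory

noncomputable section

lemma flow_succ' {E : Type*} (f : ℕ → E → E) :
    ∀ (k' j : ℕ) (x : E), flow f (k' + 1) j x = flow f k' (j + 1) (f j x) := by
  intro k'
  induction k' with
  | zero => intro j x; simp [flow]
  | succ k' ih =>
      intro j x
      show f (j + (k' + 1)) (flow f (k' + 1) j x) = f ((j + 1) + k') (flow f k' (j + 1) (f j x))
      rw [ih j x]
      congr 1
      omega

/-- Lipschitz bound on `fderiv` from a bound on the second derivative. -/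
lemma fderiv_lip {E F : Type*} [NormedAddCommGroup E] [NormedSpace ℝ E]
    [NormedAddCommGroup F] [NormedSpace ℝ F] {g : E → F} (hg : ContDiff ℝ 2 g)
    {M : ℝ} (hM : ∀ x, ‖iteratedFDeriv ℝ 2 g x‖ ≤ M) (x y : E) :
    ‖fderiv ℝ g x - fderiv ℝ g y‖ ≤ M * ‖x - y‖ := by
  have hd : ContDiff ℝ 1 (fderiv ℝ g) := hg.fderiv_right (by norm_num)
  have hb : ∀ z : E, ‖fderiv ℝ (fderiv ℝ g) z‖ ≤ M := by
    intro z
    have h1 : ‖fderiv ℝ (fderiv ℝ g) z‖ = ‖iteratedFDeriv ℝ 1 (fderiv ℝ g) z‖ := by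
      rw [← (continuousMultilinearCurryFin1 ℝ E (E →L[ℝ] F)).norm_map
        (iteratedFDeriv ℝ 1 (fderiv ℝ g) z)]
      congr 1
      ext v
      simp [iteratedFDeriv_one_apply, Fin.snoc]
    rw [h1, norm_iteratedFDeriv_fderiv]
    exact hM z
  have := convex_univ.norm_image_sub_le_of_norm_fderiv_le
    (f := fderiv ℝ g) (s := Set.univ) (C := M)
    (fun z _ => (hd.differentiable (by norm_num)).differentiableAt)
    (fun z _ => hb z) (Set.mem_univ y) (Set.mem_univ x)
  simpa using this


/-- Second-order Taylor upper bound from a Lipschitz gradient. -/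
lemma taylor_ub {E : Type*} [NormedAddCommGroup E] [NormedSpace ℝ E]
    {g : E → ℝ} (hg : Differentiable ℝ g) {M : ℝ} (hM : 0 ≤ M)
    (hlip : ∀ x y, ‖fderiv ℝ g x - fderiv ℝ g y‖ ≤ M * ‖x - y‖) (a v : E) :
    g (a + v) ≤ g a + fderiv ℝ g a v + M * ‖v‖ ^ 2 := by
  have hseg : ∀ x ∈ segment ℝ a (a + v), ‖x - a‖ ≤ ‖v‖ := by
    intro x hx
    rw [segment_eq_image'] at hx
    obtain ⟨t, ht, rfl⟩ := hx
    rw [add_sub_cancel_left, add_sub_cancel_left, norm_smul, Real.norm_eq_abs]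
    calc |t| * ‖v‖ ≤ 1 * ‖v‖ := by
          apply mul_le_mul_of_nonneg_right _ (norm_nonneg _)
          rw [abs_of_nonneg ht.1]; exact ht.2
      _ = ‖v‖ := one_mul _
  have key := (convex_segment a (a + v)).norm_image_sub_le_of_norm_fderiv_le'
    (f := g) (φ := fderiv ℝ g a) (C := M * ‖v‖)
    (fun x _ => hg x)
    (fun x hx => le_trans (hlip x a) (mul_le_mul_of_nonneg_left (hseg x hx) hM))
    (left_mem_segment ℝ a (a + v)) (right_mem_segment ℝ a (a + v))
  have h2 : |g (a + v) - g a - fderiv ℝ g a v| ≤ M * ‖v‖ ^ 2 := by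
    have : (a + v) - a = v := add_sub_cancel_left a v
    rw [this] at key
    calc |g (a + v) - g a - fderiv ℝ g a v| ≤ M * ‖v‖ * ‖v‖ := key
      _ = M * ‖v‖ ^ 2 := by ring
  linarith [abs_le.mp h2 |>.2]

/-- Linear growth from a bounded derivative. -/
lemma lin_growth {E F : Type*} [NormedAddCommGroup E] [NormedSpace ℝ E]
    [NormedAddCommGroup F] [NormedSpace ℝ F]
    {g : E → F} (hg : Differentiable ℝ g) {B : ℝ}
    (hB : ∀ x, ‖fderiv ℝ g x‖ ≤ B) (x : E) : ‖g x‖ ≤ ‖g 0‖ + B * ‖x‖ := by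
  have := convex_univ.norm_image_sub_le_of_norm_fderiv_le (f := g) (C := B)
    (fun z _ => hg z) (fun z _ => hB z)
    (Set.mem_univ (0 : E)) (Set.mem_univ x)
  simp only [sub_zero] at this
  calc ‖g x‖ = ‖g 0 + (g x - g 0)‖ := by rw [add_sub_cancel]
    _ ≤ ‖g 0‖ + ‖g x - g 0‖ := norm_add_le _ _
    _ ≤ ‖g 0‖ + B * ‖x‖ := by linarith

lemma lip_of_deriv {E F : Type*} [NormedAddCommGroup E] [NormedSpace ℝ E]
    [NormedAddCommGroup F] [NormedSpace ℝ F]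
    {g : E → F} (hg : Differentiable ℝ g) {B : ℝ}
    (hB : ∀ x, ‖fderiv ℝ g x‖ ≤ B) (x y : E) : ‖g x - g y‖ ≤ B * ‖x - y‖ := by
  exact convex_univ.norm_image_sub_le_of_norm_fderiv_le (f := g) (C := B)
    (fun z _ => hg z) (fun z _ => hB z)
    (Set.mem_univ y) (Set.mem_univ x)

lemma euclid_sum_single (m : ℕ) (v : EuclideanSpace ℝ (Fin m)) :
    ∑ i : Fin m, v i • EuclideanSpace.single i (1 : ℝ) = v := by
  have := (EuclideanSpace.basisFun (Fin m) ℝ).sum_repr v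
  simpa [EuclideanSpace.basisFun_repr, EuclideanSpace.basisFun_apply] using this

/-- `iIndepFun` is preserved under a.e. modification. -/
lemma iIndepFun_ae_congr {W : Type*} [MeasurableSpace W] {μ : Measure W} {ι : Type*}
    {β : ι → Type*} [m : ∀ i, MeasurableSpace (β i)] {f g : ∀ i, W → β i}
    (h : ProbabilityTheory.iIndepFun f μ) (hfg : ∀ i, f i =ᵐ[μ] g i) :
    ProbabilityTheory.iIndepFun g μ := by
  rw [iIndepFun_iff_measure_inter_preimage_eq_mul] at h ⊢
  intro S sets hmeas
  classical
  have hsets : ∀ i, (g i ⁻¹' sets i : Set W) =ᵐ[μ] (f i ⁻¹' sets i) :=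
    fun i => ((hfg i).symm.fun_comp (sets i))
  have hinter : ((⋂ i ∈ S, g i ⁻¹' sets i : Set W)) =ᵐ[μ] (⋂ i ∈ S, f i ⁻¹' sets i) := by
    induction S using Finset.induction with
    | empty => simp
    | insert _ _ hnotmem ih =>
        rename_i a s
        simp only [Finset.set_biInter_insert]
        exact (hsets a).inter (ih (fun i hi => hmeas i (Finset.mem_insert_of_mem hi)))
  rw [measure_congr hinter, h S hmeas]
  apply Finset.prod_congr rfl
  intro i _
  exact measure_congr (hsets i).symm


/-- Smoothness and derivative bounds for `dm ∘ flow`. -/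
lemma G_props {E : Type*} [NormedAddCommGroup E] [NormedSpace ℝ E]
    (f : ℕ → E → E) (g0 : E → ℝ)
    (hg0 : ContDiff ℝ 2 g0)
    {Ldm LHdm Lf' LHf : ℝ}
    (hLdm : 0 ≤ Ldm) (hLHdm : 0 ≤ LHdm) (hLf' : 1 ≤ Lf') (hLHf : 0 ≤ LHf)
    (hg0d : ∀ x, ‖fderiv ℝ g0 x‖ ≤ Ldm)
    (hg0l : ∀ x y, ‖fderiv ℝ g0 x - fderiv ℝ g0 y‖ ≤ LHdm * ‖x - y‖)
    (hf : ∀ k, ContDiff ℝ 2 (f k))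
    (hfd : ∀ k x, ‖fderiv ℝ (f k) x‖ ≤ Lf')
    (hfl : ∀ k (x y : E), ‖fderiv ℝ (f k) x - fderiv ℝ (f k) y‖ ≤ LHf * ‖x - y‖) :
    ∀ ℓ j : ℕ,
      ContDiff ℝ 2 (fun x => g0 (flow f ℓ j x)) ∧
      (∀ x, ‖fderiv ℝ (fun x => g0 (flow f ℓ j x)) x‖ ≤ Ldm * Lf' ^ ℓ) ∧
      (∀ x y, ‖fderiv ℝ (fun x => g0 (flow f ℓ j x)) x -
          fderiv ℝ (fun x => g0 (flow f ℓ j x)) y‖ ≤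
        (LHdm + Ldm * LHf) * (ℓ + 1) * Lf' ^ (2 * ℓ) * ‖x - y‖) := by
  intro ℓ
  induction ℓ with
  | zero =>
      intro j
      refine ⟨hg0, fun x => by simpa [flow] using hg0d x, fun x y => ?_⟩
      show ‖fderiv ℝ g0 x - fderiv ℝ g0 y‖ ≤ _
      refine le_trans (hg0l x y) ?_
      apply mul_le_mul_of_nonneg_right _ (norm_nonneg _)
      simp only [Nat.cast_zero, pow_zero, mul_one, zero_add, Nat.mul_zero]
      nlinarith [mul_nonneg hLdm hLHf]
  | succ ℓ ih =>
      intro j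
      obtain ⟨ihc, ihd, ihl⟩ := ih (j + 1)
      have hcomp : (fun x => g0 (flow f (ℓ + 1) j x)) =
          (fun x => g0 (flow f ℓ (j + 1) x)) ∘ (f j) := by
        funext x; simp [flow_succ', Function.comp]
      have hC : ContDiff ℝ 2 (fun x => g0 (flow f (ℓ + 1) j x)) := by
        rw [hcomp]; exact ihc.comp (hf j)
      have hder : ∀ x : E, fderiv ℝ (fun x => g0 (flow f (ℓ + 1) j x)) x =
          (fderiv ℝ (fun x => g0 (flow f ℓ (j + 1) x)) (f j x)).comp
            (fderiv ℝ (f j) x) := by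
        intro x
        rw [hcomp]
        exact fderiv_comp x ((ihc.differentiable (by norm_num)) (f j x))
          (((hf j).differentiable (by norm_num)) x)
      refine ⟨hC, ?_, ?_⟩
      · intro x
        rw [hder x]
        calc ‖_‖ ≤ ‖fderiv ℝ (fun x => g0 (flow f ℓ (j + 1) x)) (f j x)‖ *
              ‖fderiv ℝ (f j) x‖ := ContinuousLinearMap.opNorm_comp_le _ _
          _ ≤ (Ldm * Lf' ^ ℓ) * Lf' := by
              apply mul_le_mul (ihd _) (hfd j x) (norm_nonneg _)
              positivity
          _ = Ldm * Lf' ^ (ℓ + 1) := by ring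
      · intro x y
        rw [hder x, hder y]
        set Gx := fderiv ℝ (fun x => g0 (flow f ℓ (j + 1) x)) (f j x)
        set Gy := fderiv ℝ (fun x => g0 (flow f ℓ (j + 1) x)) (f j y)
        set Fx := fderiv ℝ (f j) x
        set Fy := fderiv ℝ (f j) y
        have hsplit : Gx.comp Fx - Gy.comp Fy =
            (Gx - Gy).comp Fx + Gy.comp (Fx - Fy) := by
          rw [ContinuousLinearMap.sub_comp, ContinuousLinearMap.comp_sub]
          abel
        have hflip : ‖f j x - f j y‖ ≤ Lf' * ‖x - y‖ :=
          lip_of_deriv ((hf j).differentiable (by norm_num)) (hfd j) x y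
        have h1 : ‖(Gx - Gy).comp Fx‖ ≤
            ((LHdm + Ldm * LHf) * (ℓ + 1) * Lf' ^ (2 * ℓ)) * (Lf' * ‖x - y‖) * Lf' := by
          calc ‖(Gx - Gy).comp Fx‖ ≤ ‖Gx - Gy‖ * ‖Fx‖ := ContinuousLinearMap.opNorm_comp_le _ _
            _ ≤ ((LHdm + Ldm * LHf) * (ℓ + 1) * Lf' ^ (2 * ℓ)) * (Lf' * ‖x - y‖) * Lf' := by
                have h2 := ihl (f j x) (f j y)
                have h3 : ‖Gx - Gy‖ ≤ (LHdm + Ldm * LHf) * (ℓ + 1) * Lf' ^ (2 * ℓ) *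
                    (Lf' * ‖x - y‖) := by
                  refine le_trans h2 ?_
                  apply mul_le_mul_of_nonneg_left hflip
                  positivity
                calc ‖Gx - Gy‖ * ‖Fx‖ ≤ ((LHdm + Ldm * LHf) * (ℓ + 1) * Lf' ^ (2 * ℓ) *
                      (Lf' * ‖x - y‖)) * Lf' :=
                      mul_le_mul h3 (hfd j x) (norm_nonneg _) (by positivity)
                  _ = _ := by ring
        have h2 : ‖Gy.comp (Fx - Fy)‖ ≤ (Ldm * Lf' ^ ℓ) * (LHf * ‖x - y‖) := by
          calc ‖Gy.comp (Fx - Fy)‖ ≤ ‖Gy‖ * ‖Fx - Fy‖ := ContinuousLinearMap.opNorm_comp_le _ _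
            _ ≤ (Ldm * Lf' ^ ℓ) * (LHf * ‖x - y‖) :=
                mul_le_mul (ihd _) (hfl j x y) (norm_nonneg _) (by positivity)
        calc ‖Gx.comp Fx - Gy.comp Fy‖ = ‖(Gx - Gy).comp Fx + Gy.comp (Fx - Fy)‖ := by
              rw [hsplit]
          _ ≤ ‖(Gx - Gy).comp Fx‖ + ‖Gy.comp (Fx - Fy)‖ := norm_add_le _ _
          _ ≤ ((LHdm + Ldm * LHf) * (ℓ + 1) * Lf' ^ (2 * ℓ)) * (Lf' * ‖x - y‖) * Lf'
              + (Ldm * Lf' ^ ℓ) * (LHf * ‖x - y‖) := add_le_add h1 h2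
          _ ≤ (LHdm + Ldm * LHf) * (↑(ℓ + 1) + 1) * Lf' ^ (2 * (ℓ + 1)) * ‖x - y‖ := by
              have hp1 : Lf' ^ ℓ ≤ Lf' ^ (2 * ℓ + 2) :=
                pow_le_pow_right₀ hLf' (by omega)
              have hnn : (0:ℝ) ≤ ‖x - y‖ := norm_nonneg _
              have e1 : ((LHdm + Ldm * LHf) * (ℓ + 1) * Lf' ^ (2 * ℓ)) * (Lf' * ‖x - y‖) * Lf'
                  = (LHdm + Ldm * LHf) * (ℓ + 1) * Lf' ^ (2 * ℓ + 2) * ‖x - y‖ := by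
                rw [pow_add]; ring
              have e2 : Ldm * LHf * Lf' ^ ℓ * ‖x - y‖ ≤
                  (LHdm + Ldm * LHf) * Lf' ^ (2 * ℓ + 2) * ‖x - y‖ := by
                apply mul_le_mul_of_nonneg_right _ hnn
                calc Ldm * LHf * Lf' ^ ℓ ≤ Ldm * LHf * Lf' ^ (2 * ℓ + 2) := by
                      apply mul_le_mul_of_nonneg_left hp1; positivity
                  _ ≤ (LHdm + Ldm * LHf) * Lf' ^ (2 * ℓ + 2) := by
                      apply mul_le_mul_of_nonneg_right _ (by positivity)
                      linarith
              rw [e1]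
              have e3 : (LHdm + Ldm * LHf) * (↑(ℓ + 1) + 1) * Lf' ^ (2 * (ℓ + 1)) * ‖x - y‖
                  = (LHdm + Ldm * LHf) * (ℓ + 1) * Lf' ^ (2 * ℓ + 2) * ‖x - y‖
                    + (LHdm + Ldm * LHf) * Lf' ^ (2 * ℓ + 2) * ‖x - y‖ := by
                push_cast
                have : 2 * (ℓ + 1) = 2 * ℓ + 2 := by ring
                rw [this]; ring
              rw [e3]
              have : (Ldm * Lf' ^ ℓ) * (LHf * ‖x - y‖) = Ldm * LHf * Lf' ^ ℓ * ‖x - y‖ := by ring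
              linarith [e2]


set_option maxHeartbeats 1000000 in
/-- stochastic disturbances: under smoothness and convergence assumptions,
for the disturbed dynamics `z_{k+1} = f_k(z_k) + A_k n_k` with independent zero-mean noise
of second moment at most `σ_n²`, there exist constants `c̄₀ > 0` and `L_H > 0` such that for
every deterministic initial condition `z₀` and every `k ≥ 1`,
`E[dm(z_k, x_*)] ≤ c̄₀ (∏_{i=0}^{k−1} τ(i)) dm(z₀, x_*)
  + (1/2) L_H σ_n² Σ_{j=0}^{k−1} (∏_{i=j+1}^{k−1} τ(i)) L_{e,j}²`. -/
theorem stmt12 (d m : ℕ)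
    {W : Type*} [MeasurableSpace W] (μ : Measure W) [IsProbabilityMeasure μ]
    (f : ℕ → EuclideanSpace ℝ (Fin d) → EuclideanSpace ℝ (Fin d))
    (Lf LHf : ℝ)
    (hf : ∀ k, ContDiff ℝ 2 (f k))
    (hDf : ∀ (k : ℕ) (x : EuclideanSpace ℝ (Fin d)), ‖fderiv ℝ (f k) x‖ ≤ Lf)
    (hD2f : ∀ (k : ℕ) (x : EuclideanSpace ℝ (Fin d)),
      ‖iteratedFDeriv ℝ 2 (f k) x‖ ≤ LHf)
    (dm : EuclideanSpace ℝ (Fin d) → EuclideanSpace ℝ (Fin d) → ℝ)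
    (dm_nonneg : ∀ x y, 0 ≤ dm x y)
    (Ldm LHdm : ℝ)
    (dm_bound : ∀ x y, dm x y ≤ Ldm * ‖x - y‖)
    (xs : EuclideanSpace ℝ (Fin d))
    (hdm_smooth : ContDiff ℝ 2 (fun x => dm x xs))
    (hdm_grad : ∀ x, ‖fderiv ℝ (fun x => dm x xs) x‖ ≤ Ldm)
    (hdm_hess : ∀ x, ‖iteratedFDeriv ℝ 2 (fun x => dm x xs) x‖ ≤ LHdm)
    (c0 : ℝ) (hc0 : 0 < c0)
    (τ : ℕ → ℝ) (hτpos : ∀ i, 0 < τ i) (hτmono : Monotone τ)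
    (hconv : ∀ (k k' : ℕ) (ξ : EuclideanSpace ℝ (Fin d)),
      dm (flow f k' k ξ) xs ≤ c0 * (∏ i ∈ Finset.Ico k (k + k'), τ i) * dm ξ xs)
    (K : ℕ) (hK : 0 < K)
    (hconvK : ∀ (k k' : ℕ) (ξ : EuclideanSpace ℝ (Fin d)), K ≤ k' →
      dm (flow f k' k ξ) xs ≤ (∏ i ∈ Finset.Ico k (k + k'), τ i) * dm ξ xs)
    (A : ℕ → (EuclideanSpace ℝ (Fin m) →L[ℝ] EuclideanSpace ℝ (Fin d)))
    (Le : ℕ → ℝ) (hA : ∀ k, ‖A k‖ ≤ Le k)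
    (n : ℕ → W → EuclideanSpace ℝ (Fin m))
    (hindep : iIndepFun n μ)
    (hn_int : ∀ k, Integrable (n k) μ)
    (hn_mean : ∀ k, ∫ ω, n k ω ∂μ = 0)
    (hn_sq_int : ∀ k, Integrable (fun ω => ‖n k ω‖ ^ 2) μ)
    (σn : ℝ) (hn_var : ∀ k, ∫ ω, ‖n k ω‖ ^ 2 ∂μ ≤ σn ^ 2) :
    ∃ c0bar > (0 : ℝ), ∃ LH > (0 : ℝ),
      ∀ (z0 : EuclideanSpace ℝ (Fin d)) (z : ℕ → W → EuclideanSpace ℝ (Fin d)),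
        (∀ ω, z 0 ω = z0) →
        (∀ (k : ℕ) (ω : W), z (k + 1) ω = f k (z k ω) + A k (n k ω)) →
        ∀ k : ℕ, 1 ≤ k →
          ∫ ω, dm (z k ω) xs ∂μ ≤
            c0bar * (∏ i ∈ Finset.range k, τ i) * dm z0 xs +
              1 / 2 * LH * σn ^ 2 *
                ∑ j ∈ Finset.range k, (∏ i ∈ Finset.Ico (j + 1) k, τ i) * Le j ^ 2 := by
  classical
  have hLdm0 : 0 ≤ Ldm := le_trans (norm_nonneg _) (hdm_grad 0)
  have hLHdm0 : 0 ≤ LHdm := le_trans (norm_nonneg _) (hdm_hess 0)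
  have hLHf0 : 0 ≤ LHf := le_trans (norm_nonneg _) (hD2f 0 0)
  have hLe0 : ∀ k, 0 ≤ Le k := fun k => le_trans (norm_nonneg _) (hA k)
  have hσ0 : (0:ℝ) ≤ σn ^ 2 := sq_nonneg _
  set Lf' : ℝ := max Lf 1 with hLf'def
  have hLf'1 : (1:ℝ) ≤ Lf' := le_max_right _ _
  have hLf'0 : (0:ℝ) ≤ Lf' := by linarith
  have hDf' : ∀ k x, ‖fderiv ℝ (f k) x‖ ≤ Lf' := fun k x => (hDf k x).trans (le_max_left _ _)
  have hfl : ∀ k (x y : EuclideanSpace ℝ (Fin d)),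
      ‖fderiv ℝ (f k) x - fderiv ℝ (f k) y‖ ≤ LHf * ‖x - y‖ :=
    fun k => fderiv_lip (hf k) (hD2f k)
  have hdml : ∀ x y : EuclideanSpace ℝ (Fin d),
      ‖fderiv ℝ (fun x => dm x xs) x - fderiv ℝ (fun x => dm x xs) y‖ ≤ LHdm * ‖x - y‖ :=
    fderiv_lip hdm_smooth hdm_hess
  have hG := G_props f (fun x => dm x xs) hdm_smooth hLdm0 hLHdm0 hLf'1 hLHf0
    hdm_grad hdml hf hDf' hfl
  set Mmax : ℝ := (LHdm + Ldm * LHf) * K * Lf' ^ (2 * K) with hMmaxdef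
  have hsum0 : (0:ℝ) ≤ LHdm + Ldm * LHf := by nlinarith
  have hMmax0 : 0 ≤ Mmax := by
    apply mul_nonneg (mul_nonneg hsum0 (Nat.cast_nonneg K)) (by positivity)
  set t0 : ℝ := min (τ 0) 1 with ht0def
  have ht0 : 0 < t0 := lt_min (hτpos 0) one_pos
  have ht01 : t0 ≤ 1 := min_le_right _ _
  set p : ℝ := t0 ^ K with hpdef
  have hp : 0 < p := pow_pos ht0 K
  set LH : ℝ := 2 * (Mmax + 1) / p with hLHdef
  have hLH : 0 < LH := by positivity
  refine ⟨max c0 1, lt_of_lt_of_le one_pos (le_max_right _ _), LH, hLH, ?_⟩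
  intro z0 z hz0 hzrec
  -- products of τ
  have hτ0le : ∀ i, t0 ≤ τ i := fun i => le_trans (min_le_left _ _) (hτmono (Nat.zero_le i))
  have hprodpos : ∀ a b : ℕ, (0:ℝ) < ∏ i ∈ Finset.Ico a b, τ i :=
    fun a b => Finset.prod_pos (fun i _ => hτpos i)
  have hprodge : ∀ a b : ℕ, b - a ≤ K → p ≤ ∏ i ∈ Finset.Ico a b, τ i := by
    intro a b hab
    have h1 : t0 ^ K ≤ t0 ^ (b - a) := pow_le_pow_of_le_one ht0.le ht01 hab
    have h2 : t0 ^ (b - a) ≤ ∏ i ∈ Finset.Ico a b, τ i := by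
      have := Finset.prod_le_prod (s := Finset.Ico a b) (f := fun _ => t0) (g := τ)
        (fun i _ => ht0.le) (fun i _ => hτ0le i)
      simpa [Finset.prod_const, Nat.card_Ico] using this
    exact le_trans h1 h2
  have hMc_le : ∀ ℓ : ℕ, ℓ + 1 ≤ K →
      (LHdm + Ldm * LHf) * (ℓ + 1) * Lf' ^ (2 * ℓ) ≤ Mmax + 1 := by
    intro ℓ hℓ
    have h1 : ((ℓ:ℝ) + 1) ≤ (K:ℝ) := by exact_mod_cast hℓ
    have h2 : Lf' ^ (2 * ℓ) ≤ Lf' ^ (2 * K) := pow_le_pow_right₀ hLf'1 (by omega)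
    have : (LHdm + Ldm * LHf) * (ℓ + 1) * Lf' ^ (2 * ℓ) ≤ Mmax := by
      rw [hMmaxdef]
      apply mul_le_mul (mul_le_mul_of_nonneg_left h1 hsum0) h2 (by positivity)
      exact mul_nonneg hsum0 (Nat.cast_nonneg K)
    linarith
  -- measurable modifications of the noise
  set n' : ℕ → W → EuclideanSpace ℝ (Fin m) := fun i => (hn_int i).1.mk (n i) with hn'def
  have hn'eq : ∀ i, n i =ᵐ[μ] n' i := fun i => (hn_int i).1.ae_eq_mk
  have hn'meas : ∀ i, Measurable (n' i) :=
    fun i => (hn_int i).1.stronglyMeasurable_mk.measurable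
  have hn'int : ∀ i, Integrable (n' i) μ := fun i => (hn_int i).congr (hn'eq i)
  have hn'mean : ∀ i, ∫ ω, n' i ω ∂μ = 0 := fun i => by
    rw [← integral_congr_ae (hn'eq i)]; exact hn_mean i
  have hn'sq : ∀ i, Integrable (fun ω => ‖n' i ω‖ ^ 2) μ := fun i =>
    (hn_sq_int i).congr ((hn'eq i).mono fun ω h => by dsimp only; rw [h])
  have hn'sqeq : ∀ i, (fun ω => ‖n i ω‖ ^ 2) =ᵐ[μ] (fun ω => ‖n' i ω‖ ^ 2) :=
    fun i => (hn'eq i).mono fun ω h => by dsimp only; rw [h]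
  have hn'var : ∀ i, ∫ ω, ‖n' i ω‖ ^ 2 ∂μ ≤ σn ^ 2 := fun i =>
    le_trans (le_of_eq (integral_congr_ae (hn'sqeq i)).symm) (hn_var i)
  have hindep' : iIndepFun n' μ :=
    iIndepFun_ae_congr hindep hn'eq
  -- the process driven by the modified noise
  obtain ⟨z', hz'zero, hz'succ⟩ : ∃ z' : ℕ → W → EuclideanSpace ℝ (Fin d),
      (∀ ω, z' 0 ω = z0) ∧ ∀ k ω, z' (k + 1) ω = f k (z' k ω) + A k (n' k ω) :=
    ⟨fun k => Nat.rec (fun _ => z0) (fun k zk ω => f k (zk ω) + A k (n' k ω)) k,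
      fun _ => rfl, fun _ _ => rfl⟩
  have hzz' : ∀ k, z k =ᵐ[μ] z' k := by
    intro k
    induction k with
    | zero => filter_upwards with ω; rw [hz0 ω, hz'zero]
    | succ k ih =>
        filter_upwards [ih, hn'eq k] with ω h1 h2
        rw [hzrec k ω, h1, h2, hz'succ]
  -- representation of `z'` as a continuous function of the noise
  obtain ⟨Φ, hΦ0, hΦsucc⟩ : ∃ Φ : (j : ℕ) →
      (Fin j → EuclideanSpace ℝ (Fin m)) → EuclideanSpace ℝ (Fin d),
      (∀ v, Φ 0 v = z0) ∧ ∀ j v, Φ (j + 1) v =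
        f j (Φ j (fun t => v t.castSucc)) + A j (v (Fin.last j)) :=
    ⟨fun j => Nat.rec (fun _ => z0)
      (fun j Φj v => f j (Φj (fun t => v t.castSucc)) + A j (v (Fin.last j))) j,
      fun _ => rfl, fun _ _ => rfl⟩
  have hΦcont : ∀ j, Continuous (Φ j) := by
    intro j
    induction j with
    | zero =>
        have : Φ 0 = fun _ => z0 := funext fun v => hΦ0 v
        rw [this]; exact continuous_const
    | succ j ih =>
        have : Φ (j + 1) = fun v =>
            f j (Φ j (fun t => v t.castSucc)) + A j (v (Fin.last j)) :=
          funext fun v => hΦsucc j v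
        rw [this]
        apply Continuous.add
        · exact (hf j).continuous.comp
            (ih.comp (continuous_pi fun t => continuous_apply _))
        · exact (A j).continuous.comp (continuous_apply _)
  have hΦz : ∀ j ω, z' j ω = Φ j (fun t => n' t ω) := by
    intro j
    induction j with
    | zero => intro ω; rw [hz'zero, hΦ0]
    | succ j ih =>
        intro ω
        rw [hz'succ, ih ω, hΦsucc]
        simp only [Fin.coe_castSucc, Fin.val_last]
  -- measurability and integrability of `z'`
  have hz'meas : ∀ k, Measurable (z' k) := by
    intro k
    induction k with
    | zero =>
        have : z' 0 = fun _ => z0 := funext fun ω => hz'zero ω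
        rw [this]; exact measurable_const
    | succ k ih =>
        have : z' (k + 1) = fun ω => f k (z' k ω) + A k (n' k ω) :=
          funext fun ω => hz'succ k ω
        rw [this]
        exact (((hf k).continuous.measurable).comp ih).add
          ((A k).continuous.measurable.comp (hn'meas k))
  have hz'int : ∀ k, Integrable (fun ω => ‖z' k ω‖) μ := by
    intro k
    induction k with
    | zero =>
        refine (integrable_const ‖z0‖).congr ?_
        filter_upwards with ω
        rw [hz'zero]
    | succ k ih =>
        apply Integrable.mono'
          (g := fun ω => (‖f k 0‖ + Lf' * ‖z' k ω‖) + Le k * ‖n' k ω‖)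
        · exact ((integrable_const _).add (ih.const_mul _)).add
            ((hn'int k).norm.const_mul _)
        · exact ((hz'meas (k + 1)).norm).aestronglyMeasurable
        · filter_upwards with ω
          rw [Real.norm_eq_abs, abs_of_nonneg (norm_nonneg _), hz'succ]
          calc ‖f k (z' k ω) + A k (n' k ω)‖ ≤ ‖f k (z' k ω)‖ + ‖A k (n' k ω)‖ :=
                norm_add_le _ _
            _ ≤ (‖f k 0‖ + Lf' * ‖z' k ω‖) + Le k * ‖n' k ω‖ := by
                apply add_le_add
                · exact lin_growth ((hf k).differentiable (by norm_num)) (hDf' k) _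
                · exact le_trans ((A k).le_opNorm _)
                    (mul_le_mul_of_nonneg_right (hA k) (norm_nonneg _))
  -- generic integrability of `G ∘ (z' k)` for linear-growth `G`
  have hIntG : ∀ (G : EuclideanSpace ℝ (Fin d) → ℝ) (C B : ℝ), Continuous G →
      (∀ x : EuclideanSpace ℝ (Fin d), |G x| ≤ C + B * ‖x‖) →
      ∀ k, Integrable (fun ω => G (z' k ω)) μ := by
    intro G C B hGc hGb k
    apply Integrable.mono' (g := fun ω => C + B * ‖z' k ω‖)
    · exact (integrable_const _).add ((hz'int k).const_mul _)
    · exact (hGc.measurable.comp (hz'meas k)).aestronglyMeasurable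
    · filter_upwards with ω
      rw [Real.norm_eq_abs]
      exact hGb (z' k ω)
  -- the one-step inequality
  have key : ∀ (B M : ℝ), 0 ≤ M → ∀ G : EuclideanSpace ℝ (Fin d) → ℝ,
      ContDiff ℝ 2 G → (∀ x, ‖fderiv ℝ G x‖ ≤ B) →
      (∀ x y, ‖fderiv ℝ G x - fderiv ℝ G y‖ ≤ M * ‖x - y‖) →
      ∀ j : ℕ, ∫ ω, G (z' (j + 1) ω) ∂μ ≤
        (∫ ω, G (f j (z' j ω)) ∂μ) + M * Le j ^ 2 * σn ^ 2 := by
    intro B M hM G hGc hGd hGl j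
    have hB0 : (0:ℝ) ≤ B := le_trans (norm_nonneg _) (hGd 0)
    have hGdiff : Differentiable ℝ G := hGc.differentiable (by norm_num)
    have hGcont : Continuous G := hGc.continuous
    have hGfd : Continuous (fderiv ℝ G) := hGc.continuous_fderiv (by norm_num)
    have hGgrow : ∀ x : EuclideanSpace ℝ (Fin d), |G x| ≤ |G 0| + B * ‖x‖ := by
      intro x
      have := lin_growth hGdiff hGd x
      simpa [Real.norm_eq_abs] using this
    have hy_meas : Measurable (fun ω => f j (z' j ω)) :=
      (hf j).continuous.measurable.comp (hz'meas j)
    -- integrability of the three pieces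
    have hGy_int : Integrable (fun ω => G (f j (z' j ω))) μ := by
      refine hIntG (fun x => G (f j x)) (|G 0| + B * ‖f j 0‖) (B * Lf')
        (hGcont.comp (hf j).continuous) ?_ j
      intro x
      have h1 := hGgrow (f j x)
      have h2 : ‖f j x‖ ≤ ‖f j 0‖ + Lf' * ‖x‖ :=
        lin_growth ((hf j).differentiable (by norm_num)) (hDf' j) x
      nlinarith [norm_nonneg x]
    have hGz_int : Integrable (fun ω => G (z' (j + 1) ω)) μ :=
      hIntG G (|G 0|) B hGcont hGgrow (j + 1)
    have hgrad_meas : Measurable (fun ω => fderiv ℝ G (f j (z' j ω)) (A j (n' j ω))) := by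
      have m1 : Measurable (fun ω => fderiv ℝ G (f j (z' j ω))) :=
        hGfd.measurable.comp hy_meas
      have m2 : Measurable (fun ω => A j (n' j ω)) :=
        (A j).continuous.measurable.comp (hn'meas j)
      have : Continuous (fun q : (EuclideanSpace ℝ (Fin d) →L[ℝ] ℝ) × EuclideanSpace ℝ (Fin d)
          => q.1 q.2) := isBoundedBilinearMap_apply.continuous
      exact this.measurable.comp (m1.prodMk m2)
    have hAn_le : ∀ ω, ‖A j (n' j ω)‖ ≤ Le j * ‖n' j ω‖ := fun ω =>
      le_trans ((A j).le_opNorm _) (mul_le_mul_of_nonneg_right (hA j) (norm_nonneg _))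
    have hgrad_int : Integrable (fun ω => fderiv ℝ G (f j (z' j ω)) (A j (n' j ω))) μ := by
      apply Integrable.mono' (g := fun ω => (B * Le j) * ‖n' j ω‖)
      · exact (hn'int j).norm.const_mul _
      · exact hgrad_meas.aestronglyMeasurable
      · filter_upwards with ω
        rw [Real.norm_eq_abs]
        calc |fderiv ℝ G (f j (z' j ω)) (A j (n' j ω))|
            ≤ ‖fderiv ℝ G (f j (z' j ω))‖ * ‖A j (n' j ω)‖ :=
              (fderiv ℝ G (f j (z' j ω))).le_opNorm _
          _ ≤ B * (Le j * ‖n' j ω‖) :=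
              mul_le_mul (hGd _) (hAn_le ω) (norm_nonneg _) hB0
          _ = (B * Le j) * ‖n' j ω‖ := by ring
    have hsq_int : Integrable (fun ω => M * (Le j ^ 2 * ‖n' j ω‖ ^ 2)) μ := by
      have := (hn'sq j).const_mul (M * Le j ^ 2)
      refine this.congr ?_
      filter_upwards with ω
      ring
    -- pointwise Taylor bound
    have hpt : ∀ ω, G (z' (j + 1) ω) ≤ G (f j (z' j ω)) +
        fderiv ℝ G (f j (z' j ω)) (A j (n' j ω)) + M * (Le j ^ 2 * ‖n' j ω‖ ^ 2) := by
      intro ω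
      rw [hz'succ]
      refine le_trans (taylor_ub hGdiff hM hGl (f j (z' j ω)) (A j (n' j ω))) ?_
      have h2 : ‖A j (n' j ω)‖ ^ 2 ≤ Le j ^ 2 * ‖n' j ω‖ ^ 2 := by
        have h3 := hAn_le ω
        nlinarith [norm_nonneg (A j (n' j ω)), norm_nonneg (n' j ω), hLe0 j]
      nlinarith
    -- the gradient term integrates to zero
    have hzero : ∫ ω, fderiv ℝ G (f j (z' j ω)) (A j (n' j ω)) ∂μ = 0 := by
      have hbase : IndepFun (z' j) (n' j) μ := by
        have h0 := hindep'.indepFun_finset (Finset.range j) {j}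
          (by simp [Finset.disjoint_right]) hn'meas
        have h1 := h0.comp
          (φ := fun w : {x : ℕ // x ∈ Finset.range j} → EuclideanSpace ℝ (Fin m) =>
            Φ j (fun t : Fin j => w ⟨(t : ℕ), Finset.mem_range.mpr t.isLt⟩))
          (ψ := fun w : {x : ℕ // x ∈ ({j} : Finset ℕ)} → EuclideanSpace ℝ (Fin m) =>
            w ⟨j, Finset.mem_singleton_self j⟩)
          ((hΦcont j).measurable.comp (measurable_pi_lambda _ fun t => measurable_pi_apply _))
          (measurable_pi_apply (X := fun _ => EuclideanSpace ℝ (Fin m)) _)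
        have e1 : (fun w : {x : ℕ // x ∈ Finset.range j} → EuclideanSpace ℝ (Fin m) =>
            Φ j (fun t : Fin j => w ⟨(t : ℕ), Finset.mem_range.mpr t.isLt⟩)) ∘
            (fun ω (t : (Finset.range j : Finset ℕ)) => n' t ω) = z' j := by
          funext ω
          rw [hΦz j ω]
          rfl
        have e2 : (fun w : {x : ℕ // x ∈ ({j} : Finset ℕ)} → EuclideanSpace ℝ (Fin m) =>
            w ⟨j, Finset.mem_singleton_self j⟩) ∘
            (fun ω (t : ({j} : Finset ℕ)) => n' t ω) = n' j := rfl
        rwa [e1, e2] at h1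
      -- decompose into coordinates
      have hsum : ∀ ω, fderiv ℝ G (f j (z' j ω)) (A j (n' j ω)) =
          ∑ i : Fin m, (fderiv ℝ G (f j (z' j ω)) (A j (EuclideanSpace.single i 1)))
            * (n' j ω i) := by
        intro ω
        conv_lhs => rw [← euclid_sum_single m (n' j ω)]
        rw [map_sum, map_sum]
        apply Finset.sum_congr rfl
        intro i _
        rw [_root_.map_smul, _root_.map_smul, smul_eq_mul, mul_comm]
      have hci_cont : ∀ i : Fin m, Continuous (fun x : EuclideanSpace ℝ (Fin d) =>
          fderiv ℝ G (f j x) (A j (EuclideanSpace.single i 1))) := by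
        intro i
        exact (hGfd.comp (hf j).continuous).clm_apply continuous_const
      have hci_bdd : ∀ (i : Fin m) (x : EuclideanSpace ℝ (Fin d)),
          ‖fderiv ℝ G (f j x) (A j (EuclideanSpace.single i 1))‖ ≤ B * Le j := by
        intro i x
        rw [Real.norm_eq_abs]
        calc |fderiv ℝ G (f j x) (A j (EuclideanSpace.single i 1))|
            ≤ ‖fderiv ℝ G (f j x)‖ * ‖A j (EuclideanSpace.single i 1)‖ :=
              (fderiv ℝ G (f j x)).le_opNorm _
          _ ≤ B * Le j := by
              apply mul_le_mul (hGd _) _ (norm_nonneg _) hB0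
              calc ‖A j (EuclideanSpace.single i 1)‖
                  ≤ ‖A j‖ * ‖EuclideanSpace.single i (1:ℝ)‖ := (A j).le_opNorm _
                _ = ‖A j‖ := by rw [EuclideanSpace.norm_single]; simp
                _ ≤ Le j := hA j
      have hYi_int : ∀ i : Fin m, Integrable (fun ω => n' j ω i) μ := by
        intro i
        have := (EuclideanSpace.proj (𝕜 := ℝ) i).integrable_comp (hn'int j)
        simpa using this
      have hterm_int : ∀ i : Fin m, Integrable (fun ω =>
          (fderiv ℝ G (f j (z' j ω)) (A j (EuclideanSpace.single i 1))) * (n' j ω i)) μ := by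
        intro i
        exact (hYi_int i).bdd_mul
          (c := B * Le j) (((hci_cont i).measurable.comp (hz'meas j)).aestronglyMeasurable)
          (Filter.Eventually.of_forall fun ω => hci_bdd i (z' j ω))
      have hYi_zero : ∀ i : Fin m, ∫ ω, n' j ω i ∂μ = 0 := by
        intro i
        have := (EuclideanSpace.proj (𝕜 := ℝ) i).integral_comp_comm (hn'int j)
        simp only [hn'mean j] at this
        simpa using this
      have hterm_zero : ∀ i : Fin m, ∫ ω,
          (fderiv ℝ G (f j (z' j ω)) (A j (EuclideanSpace.single i 1))) * (n' j ω i) ∂μ = 0 := by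
        intro i
        have hXY : IndepFun (fun ω => fderiv ℝ G (f j (z' j ω)) (A j (EuclideanSpace.single i 1)))
            (fun ω => n' j ω i) μ := by
          have := hbase.comp ((hci_cont i).measurable)
            ((EuclideanSpace.proj (𝕜 := ℝ) i).continuous.measurable)
          exact this
        have hXint : Integrable
            (fun ω => fderiv ℝ G (f j (z' j ω)) (A j (EuclideanSpace.single i 1))) μ := by
          apply Integrable.mono' (integrable_const (B * Le j))
          · exact ((hci_cont i).measurable.comp (hz'meas j)).aestronglyMeasurable
          · filter_upwards with ω; exact hci_bdd i (z' j ω)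
        have := hXY.integral_fun_mul_eq_mul_integral hXint.aestronglyMeasurable (hYi_int i).aestronglyMeasurable
        calc ∫ ω, (fderiv ℝ G (f j (z' j ω)) (A j (EuclideanSpace.single i 1))) * (n' j ω i) ∂μ
            = (∫ ω, fderiv ℝ G (f j (z' j ω)) (A j (EuclideanSpace.single i 1)) ∂μ)
              * ∫ ω, n' j ω i ∂μ := this
          _ = 0 := by rw [hYi_zero i, mul_zero]
      calc ∫ ω, fderiv ℝ G (f j (z' j ω)) (A j (n' j ω)) ∂μ
          = ∫ ω, ∑ i : Fin m, (fderiv ℝ G (f j (z' j ω)) (A j (EuclideanSpace.single i 1)))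
              * (n' j ω i) ∂μ := by
            apply integral_congr_ae
            filter_upwards with ω
            exact hsum ω
        _ = ∑ i : Fin m, ∫ ω, (fderiv ℝ G (f j (z' j ω)) (A j (EuclideanSpace.single i 1)))
              * (n' j ω i) ∂μ := integral_finset_sum _ (fun i _ => hterm_int i)
        _ = 0 := by
            apply Finset.sum_eq_zero
            intro i _
            exact hterm_zero i
    -- put the pieces together
    calc ∫ ω, G (z' (j + 1) ω) ∂μ
        ≤ ∫ ω, (G (f j (z' j ω)) + fderiv ℝ G (f j (z' j ω)) (A j (n' j ω))
            + M * (Le j ^ 2 * ‖n' j ω‖ ^ 2)) ∂μ :=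
          integral_mono hGz_int ((hGy_int.add hgrad_int).add hsq_int) hpt
      _ = (∫ ω, (G (f j (z' j ω)) + fderiv ℝ G (f j (z' j ω)) (A j (n' j ω))) ∂μ)
            + ∫ ω, M * (Le j ^ 2 * ‖n' j ω‖ ^ 2) ∂μ :=
          integral_add (hGy_int.add hgrad_int) hsq_int
      _ = (∫ ω, G (f j (z' j ω)) ∂μ) + (∫ ω, fderiv ℝ G (f j (z' j ω)) (A j (n' j ω)) ∂μ)
            + ∫ ω, M * (Le j ^ 2 * ‖n' j ω‖ ^ 2) ∂μ := by
          rw [integral_add hGy_int hgrad_int]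
      _ ≤ (∫ ω, G (f j (z' j ω)) ∂μ) + M * Le j ^ 2 * σn ^ 2 := by
          rw [hzero, add_zero]
          have h1 : ∫ ω, M * (Le j ^ 2 * ‖n' j ω‖ ^ 2) ∂μ
              = (M * Le j ^ 2) * ∫ ω, ‖n' j ω‖ ^ 2 ∂μ := by
            rw [← integral_const_mul]
            apply integral_congr_ae
            filter_upwards with ω
            ring
          have h2 : (M * Le j ^ 2) * ∫ ω, ‖n' j ω‖ ^ 2 ∂μ ≤ (M * Le j ^ 2) * σn ^ 2 := by
            apply mul_le_mul_of_nonneg_left (hn'var j)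
            positivity
          rw [h1]
          linarith
  -- integrability of dm ∘ flow ∘ z'
  have hIdm : ∀ (ℓ a b : ℕ), Integrable (fun ω => dm (flow f ℓ a (z' b ω)) xs) μ := by
    intro ℓ a b
    obtain ⟨hc, hd, _⟩ := hG ℓ a
    refine hIntG (fun x => dm (flow f ℓ a x) xs)
      (|dm (flow f ℓ a 0) xs|) (Ldm * Lf' ^ ℓ) hc.continuous ?_ b
    intro x
    have h1 : ‖dm (flow f ℓ a x) xs - dm (flow f ℓ a 0) xs‖ ≤ (Ldm * Lf' ^ ℓ) * ‖x - 0‖ :=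
      lip_of_deriv (hc.differentiable (by norm_num)) hd x 0
    rw [Real.norm_eq_abs] at h1
    simp only [sub_zero] at h1
    have := abs_le.mp h1
    have h2 := abs_le.mp (le_refl |dm (flow f ℓ a 0) xs|)
    cases' abs_le.mp h1 with hl hr
    have : |dm (flow f ℓ a x) xs| ≤ |dm (flow f ℓ a 0) xs| + (Ldm * Lf' ^ ℓ) * ‖x‖ := by
      cases' abs_cases (dm (flow f ℓ a x) xs) with hc1 hc1 <;>
        cases' abs_cases (dm (flow f ℓ a 0) xs) with hc2 hc2 <;> linarith
    exact this
  -- the telescoping estimate over at most K steps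
  have R : ∀ ℓ : ℕ, ℓ ≤ K → ∀ a : ℕ,
      ∫ ω, dm (z' (a + ℓ) ω) xs ∂μ ≤
        (∫ ω, dm (flow f ℓ a (z' a ω)) xs ∂μ) +
          1 / 2 * LH * σn ^ 2 *
            ∑ j ∈ Finset.range ℓ, (∏ i ∈ Finset.Ico (a + j + 1) (a + ℓ), τ i) * Le (a + j) ^ 2 := by
    intro ℓ
    induction ℓ with
    | zero =>
        intro _ a
        simp [flow]
    | succ ℓ ih =>
        intro hℓK a
        have hih := ih (by omega) (a + 1)
        obtain ⟨hGc, hGd, hGl⟩ := hG ℓ (a + 1)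
        have hMc0 : (0:ℝ) ≤ (LHdm + Ldm * LHf) * ((ℓ:ℝ) + 1) * Lf' ^ (2 * ℓ) := by positivity
        have hstep := key (Ldm * Lf' ^ ℓ) ((LHdm + Ldm * LHf) * ((ℓ:ℝ) + 1) * Lf' ^ (2 * ℓ))
          hMc0 (fun x => dm (flow f ℓ (a + 1) x) xs) hGc hGd hGl a
        -- rewrite the flow composition
        have hflow : ∀ x : EuclideanSpace ℝ (Fin d),
            dm (flow f ℓ (a + 1) (f a x)) xs = dm (flow f (ℓ + 1) a x) xs := by
          intro x; rw [← flow_succ']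
        have hstep' : ∫ ω, dm (flow f ℓ (a + 1) (z' (a + 1) ω)) xs ∂μ ≤
            (∫ ω, dm (flow f (ℓ + 1) a (z' a ω)) xs ∂μ) +
              (LHdm + Ldm * LHf) * ((ℓ:ℝ) + 1) * Lf' ^ (2 * ℓ) * Le a ^ 2 * σn ^ 2 := by
          refine le_trans hstep ?_
          apply add_le_add_left
          apply le_of_eq
          apply integral_congr_ae
          filter_upwards with ω
          exact hflow (z' a ω)
        -- the noise coefficient is dominated
        have hcoef : (LHdm + Ldm * LHf) * ((ℓ:ℝ) + 1) * Lf' ^ (2 * ℓ) * Le a ^ 2 * σn ^ 2 ≤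
            1 / 2 * LH * σn ^ 2 * ((∏ i ∈ Finset.Ico (a + 1) (a + (ℓ + 1)), τ i) * Le a ^ 2) := by
          have h1 : (LHdm + Ldm * LHf) * ((ℓ:ℝ) + 1) * Lf' ^ (2 * ℓ) ≤ Mmax + 1 :=
            hMc_le ℓ hℓK
          have h2 : p ≤ ∏ i ∈ Finset.Ico (a + 1) (a + (ℓ + 1)), τ i :=
            hprodge _ _ (by omega)
          have h3 : Mmax + 1 ≤ 1 / 2 * LH * (∏ i ∈ Finset.Ico (a + 1) (a + (ℓ + 1)), τ i) := by
            have hge1 : 1 ≤ (∏ i ∈ Finset.Ico (a + 1) (a + (ℓ + 1)), τ i) / p :=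
              (one_le_div hp).mpr h2
            have heq : 1 / 2 * LH * (∏ i ∈ Finset.Ico (a + 1) (a + (ℓ + 1)), τ i)
                = (Mmax + 1) * ((∏ i ∈ Finset.Ico (a + 1) (a + (ℓ + 1)), τ i) / p) := by
              rw [hLHdef]; field_simp
            rw [heq]
            nlinarith
          calc (LHdm + Ldm * LHf) * ((ℓ:ℝ) + 1) * Lf' ^ (2 * ℓ) * Le a ^ 2 * σn ^ 2
              ≤ (Mmax + 1) * Le a ^ 2 * σn ^ 2 := by
                apply mul_le_mul_of_nonneg_right _ hσ0
                apply mul_le_mul_of_nonneg_right h1 (sq_nonneg _)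
            _ ≤ (1 / 2 * LH * (∏ i ∈ Finset.Ico (a + 1) (a + (ℓ + 1)), τ i)) * Le a ^ 2 * σn ^ 2 := by
                apply mul_le_mul_of_nonneg_right _ hσ0
                apply mul_le_mul_of_nonneg_right h3 (sq_nonneg _)
            _ = 1 / 2 * LH * σn ^ 2 * ((∏ i ∈ Finset.Ico (a + 1) (a + (ℓ + 1)), τ i) * Le a ^ 2) := by
                ring
        -- reindex the sums
        have hsum_eq : ∑ j ∈ Finset.range (ℓ + 1),
            (∏ i ∈ Finset.Ico (a + j + 1) (a + (ℓ + 1)), τ i) * Le (a + j) ^ 2 =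
            ((∏ i ∈ Finset.Ico (a + 1) (a + (ℓ + 1)), τ i) * Le a ^ 2) +
            ∑ j ∈ Finset.range ℓ,
              (∏ i ∈ Finset.Ico ((a + 1) + j + 1) ((a + 1) + ℓ), τ i) * Le ((a + 1) + j) ^ 2 := by
          rw [Finset.sum_range_succ']
          have etail : ∑ k ∈ Finset.range ℓ,
              (∏ i ∈ Finset.Ico (a + (k + 1) + 1) (a + (ℓ + 1)), τ i) * Le (a + (k + 1)) ^ 2 =
              ∑ j ∈ Finset.range ℓ,
              (∏ i ∈ Finset.Ico ((a + 1) + j + 1) ((a + 1) + ℓ), τ i) * Le ((a + 1) + j) ^ 2 := by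
            apply Finset.sum_congr rfl
            intro j _
            have e1 : a + (j + 1) + 1 = (a + 1) + j + 1 := by omega
            have e2 : a + (ℓ + 1) = (a + 1) + ℓ := by omega
            have e3 : a + (j + 1) = (a + 1) + j := by omega
            rw [e1, e2, e3]
          rw [etail, Nat.add_zero]
          exact add_comm _ _
        have hz_eq : ∀ ω, z' (a + (ℓ + 1)) ω = z' ((a + 1) + ℓ) ω := by
          intro ω
          have : a + (ℓ + 1) = (a + 1) + ℓ := by omega
          rw [this]
        calc ∫ ω, dm (z' (a + (ℓ + 1)) ω) xs ∂μ
            = ∫ ω, dm (z' ((a + 1) + ℓ) ω) xs ∂μ := by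
              apply integral_congr_ae
              filter_upwards with ω
              rw [hz_eq ω]
          _ ≤ (∫ ω, dm (flow f ℓ (a + 1) (z' (a + 1) ω)) xs ∂μ) +
                1 / 2 * LH * σn ^ 2 * ∑ j ∈ Finset.range ℓ,
                  (∏ i ∈ Finset.Ico ((a + 1) + j + 1) ((a + 1) + ℓ), τ i)
                    * Le ((a + 1) + j) ^ 2 := hih
          _ ≤ ((∫ ω, dm (flow f (ℓ + 1) a (z' a ω)) xs ∂μ) +
                (LHdm + Ldm * LHf) * ((ℓ:ℝ) + 1) * Lf' ^ (2 * ℓ) * Le a ^ 2 * σn ^ 2) +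
                1 / 2 * LH * σn ^ 2 * ∑ j ∈ Finset.range ℓ,
                  (∏ i ∈ Finset.Ico ((a + 1) + j + 1) ((a + 1) + ℓ), τ i)
                    * Le ((a + 1) + j) ^ 2 := by
              apply add_le_add_left hstep'
          _ ≤ (∫ ω, dm (flow f (ℓ + 1) a (z' a ω)) xs ∂μ) +
                1 / 2 * LH * σn ^ 2 * ∑ j ∈ Finset.range (ℓ + 1),
                  (∏ i ∈ Finset.Ico (a + j + 1) (a + (ℓ + 1)), τ i) * Le (a + j) ^ 2 := by
              rw [hsum_eq, mul_add]
              have := hcoef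
              linarith
  -- integrability of dm ∘ z'
  have hIdm0 : ∀ b, Integrable (fun ω => dm (z' b ω) xs) μ := fun b => by
    have := hIdm 0 0 b
    simpa [flow] using this
  -- main estimate by strong induction
  have main : ∀ k : ℕ, 1 ≤ k → ∫ ω, dm (z' k ω) xs ∂μ ≤
      (max c0 1) * (∏ i ∈ Finset.range k, τ i) * dm z0 xs +
        1 / 2 * LH * σn ^ 2 *
          ∑ j ∈ Finset.range k, (∏ i ∈ Finset.Ico (j + 1) k, τ i) * Le j ^ 2 := by
    intro k
    induction k using Nat.strong_induction_on with
    | _ k ihk =>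
      intro hk1
      by_cases hkK : k ≤ K
      · -- base case: k ≤ K, use the c0-convergence bound
        have h := R k hkK 0
        simp only [Nat.zero_add] at h
        have hflow0 : ∫ ω, dm (flow f k 0 (z' 0 ω)) xs ∂μ = dm (flow f k 0 z0) xs := by
          have he : (fun ω => dm (flow f k 0 (z' 0 ω)) xs) =
              fun _ => dm (flow f k 0 z0) xs := funext fun ω => by rw [hz'zero]
          rw [he, integral_const, probReal_univ, one_smul]
        have h2 : dm (flow f k 0 z0) xs ≤
            (max c0 1) * (∏ i ∈ Finset.range k, τ i) * dm z0 xs := by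
          have h3 := hconv 0 k z0
          simp only [Nat.zero_add] at h3
          rw [Finset.range_eq_Ico]
          calc dm (flow f k 0 z0) xs ≤ c0 * (∏ i ∈ Finset.Ico 0 k, τ i) * dm z0 xs := h3
            _ ≤ (max c0 1) * (∏ i ∈ Finset.Ico 0 k, τ i) * dm z0 xs := by
                apply mul_le_mul_of_nonneg_right _ (dm_nonneg _ _)
                apply mul_le_mul_of_nonneg_right (le_max_left _ _) (hprodpos 0 k).le
        rw [hflow0] at h
        exact le_trans h (by linarith)
      · -- inductive step: k > K
        push_neg at hkK
        obtain ⟨k0, rfl⟩ : ∃ k0, k = k0 + K := ⟨k - K, by omega⟩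
        have hk01 : 1 ≤ k0 := by
          by_contra hcon
          push_neg at hcon
          interval_cases k0 <;> omega
        have hR := R K le_rfl k0
        set Q : ℝ := ∏ i ∈ Finset.Ico k0 (k0 + K), τ i with hQdef
        have hQpos : 0 < Q := hprodpos _ _
        have hcontr : ∫ ω, dm (flow f K k0 (z' k0 ω)) xs ∂μ ≤
            Q * ∫ ω, dm (z' k0 ω) xs ∂μ := by
          rw [← integral_const_mul]
          apply integral_mono (hIdm K k0 k0) ((hIdm0 k0).const_mul Q)
          intro ω
          exact hconvK k0 K (z' k0 ω) le_rfl
        have hih := ihk k0 (by omega) hk01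
        -- product combination
        have hprodcomb : (∏ i ∈ Finset.range k0, τ i) * Q = ∏ i ∈ Finset.range (k0 + K), τ i := by
          rw [Finset.range_eq_Ico, Finset.range_eq_Ico, hQdef]
          exact Finset.prod_Ico_consecutive τ (Nat.zero_le k0) (Nat.le_add_right k0 K)
        have hprodterm : ∀ j, j < k0 →
            (∏ i ∈ Finset.Ico (j + 1) k0, τ i) * Q = ∏ i ∈ Finset.Ico (j + 1) (k0 + K), τ i := by
          intro j hj
          rw [hQdef]
          exact Finset.prod_Ico_consecutive τ (by omega) (Nat.le_add_right k0 K)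
        -- sum splitting
        have hsplit : ∑ j ∈ Finset.range (k0 + K),
            (∏ i ∈ Finset.Ico (j + 1) (k0 + K), τ i) * Le j ^ 2 =
            (∑ j ∈ Finset.range k0, (∏ i ∈ Finset.Ico (j + 1) (k0 + K), τ i) * Le j ^ 2) +
            ∑ j ∈ Finset.Ico k0 (k0 + K), (∏ i ∈ Finset.Ico (j + 1) (k0 + K), τ i) * Le j ^ 2 := by
          rw [Finset.range_eq_Ico, Finset.range_eq_Ico]
          exact (Finset.sum_Ico_consecutive _ (Nat.zero_le k0) (Nat.le_add_right k0 K)).symm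
        -- reindex the tail sum of hR
        have htail : ∑ j ∈ Finset.range K,
            (∏ i ∈ Finset.Ico (k0 + j + 1) (k0 + K), τ i) * Le (k0 + j) ^ 2 =
            ∑ j ∈ Finset.Ico k0 (k0 + K), (∏ i ∈ Finset.Ico (j + 1) (k0 + K), τ i) * Le j ^ 2 := by
          rw [Finset.sum_Ico_eq_sum_range]
          simp only [Nat.add_sub_cancel_left]
        -- put everything together
        have hstep2 : ∫ ω, dm (z' (k0 + K) ω) xs ∂μ ≤
            Q * ∫ ω, dm (z' k0 ω) xs ∂μ +
              1 / 2 * LH * σn ^ 2 *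
                ∑ j ∈ Finset.Ico k0 (k0 + K), (∏ i ∈ Finset.Ico (j + 1) (k0 + K), τ i)
                  * Le j ^ 2 := by
          rw [← htail]
          exact le_trans hR (by linarith [hcontr])
        have hmul : Q * ∫ ω, dm (z' k0 ω) xs ∂μ ≤
            Q * ((max c0 1) * (∏ i ∈ Finset.range k0, τ i) * dm z0 xs +
              1 / 2 * LH * σn ^ 2 *
                ∑ j ∈ Finset.range k0, (∏ i ∈ Finset.Ico (j + 1) k0, τ i) * Le j ^ 2) :=
          mul_le_mul_of_nonneg_left hih hQpos.le
        have hQsum : Q * ∑ j ∈ Finset.range k0, (∏ i ∈ Finset.Ico (j + 1) k0, τ i) * Le j ^ 2 =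
            ∑ j ∈ Finset.range k0, (∏ i ∈ Finset.Ico (j + 1) (k0 + K), τ i) * Le j ^ 2 := by
          rw [Finset.mul_sum]
          apply Finset.sum_congr rfl
          intro j hj
          rw [← hprodterm j (Finset.mem_range.mp hj)]
          ring
        calc ∫ ω, dm (z' (k0 + K) ω) xs ∂μ
            ≤ Q * ((max c0 1) * (∏ i ∈ Finset.range k0, τ i) * dm z0 xs +
                1 / 2 * LH * σn ^ 2 *
                  ∑ j ∈ Finset.range k0, (∏ i ∈ Finset.Ico (j + 1) k0, τ i) * Le j ^ 2) +
              1 / 2 * LH * σn ^ 2 *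
                ∑ j ∈ Finset.Ico k0 (k0 + K), (∏ i ∈ Finset.Ico (j + 1) (k0 + K), τ i)
                  * Le j ^ 2 := by linarith [hstep2, hmul]
          _ = (max c0 1) * (∏ i ∈ Finset.range (k0 + K), τ i) * dm z0 xs +
              1 / 2 * LH * σn ^ 2 *
                ∑ j ∈ Finset.range (k0 + K), (∏ i ∈ Finset.Ico (j + 1) (k0 + K), τ i)
                  * Le j ^ 2 := by
              rw [hsplit, mul_add]
              have e1 : Q * ((max c0 1) * (∏ i ∈ Finset.range k0, τ i) * dm z0 xs) =
                  (max c0 1) * (∏ i ∈ Finset.range (k0 + K), τ i) * dm z0 xs := by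
                rw [← hprodcomb]; ring
              have e2 : Q * (1 / 2 * LH * σn ^ 2 *
                  ∑ j ∈ Finset.range k0, (∏ i ∈ Finset.Ico (j + 1) k0, τ i) * Le j ^ 2) =
                  1 / 2 * LH * σn ^ 2 *
                  ∑ j ∈ Finset.range k0, (∏ i ∈ Finset.Ico (j + 1) (k0 + K), τ i) * Le j ^ 2 := by
                rw [← hQsum]; ring
              rw [mul_add] at *
              linarith [e1, e2]
  -- transfer from z' back to z
  intro k hk1
  have heq : ∫ ω, dm (z k ω) xs ∂μ = ∫ ω, dm (z' k ω) xs ∂μ :=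
    integral_congr_ae ((hzz' k).mono fun ω h => by dsimp only; rw [h])
  rw [heq]
  exact main k hk1

end
end
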